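/- arXiv:1209.0653 — 15 statements merged into one kernel-verified Lean document; each statement's English description precedes it below -/
import Mathlib

section
/- Assume κ > −1 and set φ₂ := (1+κ)^{−1/2}·h and φ₃ := (1+κ)^{−1/2}·(φ∘h). Then (φ, φ₂, φ₃) is an almost bi-paracontact structure: φ₂∘φ₂ = id_V − η⊗ξ, φ∘φ₂ = −φ₂∘φ = φ₃, φ₃∘φ₃ = −id_V + η⊗ξ, and φ₃(ξ) = 0. -/
theorem stmt_0
    {V : Type*} [AddCommGroup V] [Module ℝ V]
    (ξ : V) (η : V →ₗ[ℝ] ℝ) (φ h : V →ₗ[ℝ] V) (κ : ℝ)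
    (hηξ : η ξ = 1)
    (hφ2 : ∀ v, φ (φ v) = v - η v • ξ)
    (hφξ : φ ξ = 0)
    (hηφ : ∀ v, η (φ v) = 0)
    (hhξ : h ξ = 0)
    (hηh : ∀ v, η (h v) = 0)
    (hhφ : ∀ v, h (φ v) = - φ (h v))
    (hh2 : ∀ v, h (h v) = (1 + κ) • φ (φ v))
    (hκ : -1 < κ)
    (φ₂ φ₃ : V →ₗ[ℝ] V)
    (hφ₂ : φ₂ = (Real.sqrt (1 + κ))⁻¹ • h)
    (hφ₃ : φ₃ = (Real.sqrt (1 + κ))⁻¹ • (φ ∘ₗ h)) :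
    (∀ v, φ₂ (φ₂ v) = v - η v • ξ) ∧
    (∀ v, φ (φ₂ v) = φ₃ v) ∧
    (∀ v, φ₂ (φ v) = - φ₃ v) ∧
    (∀ v, φ₃ (φ₃ v) = - v + η v • ξ) ∧
    φ₃ ξ = 0 := by
  have hpos : (0:ℝ) < 1 + κ := by linarith
  set c : ℝ := (Real.sqrt (1 + κ))⁻¹ with hc
  have hc2 : c * c * (1 + κ) = 1 := by
    rw [hc, ← mul_inv, Real.mul_self_sqrt hpos.le]
    exact inv_mul_cancel₀ (ne_of_gt hpos)
  subst hφ₂ hφ₃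
  refine ⟨?_, ?_, ?_, ?_, ?_⟩
  · intro v
    simp only [LinearMap.smul_apply, map_smul, hh2, smul_smul]
    rw [← mul_assoc, hc2, one_smul, hφ2]
  · intro v
    simp only [LinearMap.smul_apply, LinearMap.comp_apply, map_smul]
  · intro v
    simp only [LinearMap.smul_apply, LinearMap.comp_apply, map_smul, hhφ, smul_neg]
  · intro v
    simp only [LinearMap.smul_apply, LinearMap.comp_apply, map_smul]
    rw [hhφ, map_neg, hφ2 (h (h v)), hηh, zero_smul, sub_zero, hh2, hφ2 v]
    simp only [smul_neg, smul_smul, smul_sub]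
    rw [show c * (c * (1 + κ)) = 1 by rw [← mul_assoc]; exact hc2,
        show c * (c * ((1 + κ) * η v)) = η v by rw [← mul_assoc, ← mul_assoc, hc2, one_mul],
        one_smul]
    abel
  · simp only [LinearMap.smul_apply, LinearMap.comp_apply, hhξ, map_zero, smul_zero]
end

section
/- Assume κ < −1 and set φ₂ := (−1−κ)^{−1/2}·(φ∘h) and φ₃ := (−1−κ)^{−1/2}·h. Then (φ, φ₂, φ₃) is an almost bi-paracontact structure: φ₂∘φ₂ = id_V − η⊗ξ, φ∘φ₂ = −φ₂∘φ = φ₃, φ₃∘φ₃ = −id_V + η⊗ξ, and φ₃(ξ) = 0. -/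
/-!
`h` anticommutes with `φ` and takes values in `ker η`, on which `φ² = id`; hence `φ ∘ h` and `h`
square to `-(1 + κ) (id - η ⊗ ξ)` and `(1 + κ) (id - η ⊗ ξ)`. For `κ < -1` the factor
`(-1 - κ)^{-1/2}` normalises these squares to `±(id - η ⊗ ξ)`.
-/

section

variable {R V : Type*} [CommRing R] [AddCommGroup V] [Module R V]
  {ξ : V} {η : V →ₗ[R] R} {φ h : V →ₗ[R] V}

theorem apply_apply_of_eta_eq_zero (hφ2 : ∀ v, φ (φ v) = v - η v • ξ) {v : V} (hv : η v = 0) :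
    φ (φ v) = v := by
  rw [hφ2, hv, zero_smul, sub_zero]

theorem comp_apply_comp_apply_eq_neg_smul (hφ2 : ∀ v, φ (φ v) = v - η v • ξ)
    (hηφ : ∀ v, η (φ v) = 0) (hhφ : ∀ v, h (φ v) = - φ (h v)) {a : R}
    (hh2 : ∀ v, h (h v) = a • φ (φ v)) (v : V) :
    φ (h (φ (h v))) = -a • (v - η v • ξ) :=
  calc φ (h (φ (h v))) = -φ (φ (h (h v))) := by rw [hhφ, map_neg]
    _ = -a • φ (φ (φ (φ v))) := by rw [hh2, map_smul, map_smul, neg_smul]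
    _ = -a • (v - η v • ξ) := by rw [apply_apply_of_eta_eq_zero hφ2 (hηφ (φ v)), hφ2]

theorem smul_apply_smul_apply (c : R) (f : V →ₗ[R] V) (v : V) :
    (c • f) ((c • f) v) = (c * c) • f (f v) := by
  simp only [LinearMap.smul_apply, map_smul, smul_smul]

end

theorem stmt_1_general
    {V : Type*} [AddCommGroup V] [Module ℝ V]
    (ξ : V) (η : V →ₗ[ℝ] ℝ) (φ h : V →ₗ[ℝ] V) (κ : ℝ)
    (hφ2 : ∀ v, φ (φ v) = v - η v • ξ)
    (hηφ : ∀ v, η (φ v) = 0)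
    (hhξ : h ξ = 0)
    (hηh : ∀ v, η (h v) = 0)
    (hhφ : ∀ v, h (φ v) = - φ (h v))
    (hh2 : ∀ v, h (h v) = (1 + κ) • φ (φ v))
    (hκ : κ < -1)
    (φ₂ φ₃ : V →ₗ[ℝ] V)
    (hφ₂ : φ₂ = (Real.sqrt (-1 - κ))⁻¹ • (φ ∘ₗ h))
    (hφ₃ : φ₃ = (Real.sqrt (-1 - κ))⁻¹ • h) :
    (∀ v, φ₂ (φ₂ v) = v - η v • ξ) ∧
    (∀ v, φ (φ₂ v) = φ₃ v) ∧
    (∀ v, φ₂ (φ v) = - φ₃ v) ∧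
    (∀ v, φ₃ (φ₃ v) = - v + η v • ξ) ∧
    φ₃ ξ = 0 := by
  set c := (Real.sqrt (-1 - κ))⁻¹
  have hc : c * c * (1 + κ) = -1 := by
    rw [← mul_inv, Real.mul_self_sqrt (by linarith)]
    field_simp [show -1 - κ ≠ 0 by linarith]
    ring
  have hφφh v : φ (φ (h v)) = h v := apply_apply_of_eta_eq_zero hφ2 (hηh v)
  subst hφ₂ hφ₃
  refine ⟨fun v => ?_, fun v => ?_, fun v => ?_, fun v => ?_, ?_⟩
  · rw [smul_apply_smul_apply, LinearMap.comp_apply, LinearMap.comp_apply,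
      comp_apply_comp_apply_eq_neg_smul hφ2 hηφ hhφ hh2, smul_smul, mul_neg, hc, neg_neg, one_smul]
  · simp only [LinearMap.smul_apply, LinearMap.comp_apply, map_smul, hφφh]
  · simp only [LinearMap.smul_apply, LinearMap.comp_apply, hhφ, map_neg, hφφh, smul_neg]
  · rw [smul_apply_smul_apply, hh2, hφ2, smul_smul, hc, neg_one_smul, neg_sub, sub_eq_neg_add]
  · rw [LinearMap.smul_apply, hhξ, smul_zero]

theorem stmt_1
    {V : Type*} [AddCommGroup V] [Module ℝ V]
    (ξ : V) (η : V →ₗ[ℝ] ℝ) (φ h : V →ₗ[ℝ] V) (κ : ℝ)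
    (hηξ : η ξ = 1)
    (hφ2 : ∀ v, φ (φ v) = v - η v • ξ)
    (hφξ : φ ξ = 0)
    (hηφ : ∀ v, η (φ v) = 0)
    (hhξ : h ξ = 0)
    (hηh : ∀ v, η (h v) = 0)
    (hhφ : ∀ v, h (φ v) = - φ (h v))
    (hh2 : ∀ v, h (h v) = (1 + κ) • φ (φ v))
    (hκ : κ < -1)
    (φ₂ φ₃ : V →ₗ[ℝ] V)
    (hφ₂ : φ₂ = (Real.sqrt (-1 - κ))⁻¹ • (φ ∘ₗ h))
    (hφ₃ : φ₃ = (Real.sqrt (-1 - κ))⁻¹ • h) :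
    (∀ v, φ₂ (φ₂ v) = v - η v • ξ) ∧
    (∀ v, φ (φ₂ v) = φ₃ v) ∧
    (∀ v, φ₂ (φ v) = - φ₃ v) ∧
    (∀ v, φ₃ (φ₃ v) = - v + η v • ξ) ∧
    φ₃ ξ = 0 :=
  stmt_1_general ξ η φ h κ hφ2 hηφ hhξ hηh hhφ hh2 hκ φ₂ φ₃ hφ₂ hφ₃
end

section
/- Assume κ > −1, set λ := √(1+κ), and assume dim V = 2n+1. Then φ restricts to a linear isomorphism of ker(h − λ·id) onto ker(h + λ·id); in particular dim ker(h − λ·id) = dim ker(h + λ·id) = n. Moreover the three subspaces ker(h − λ·id), ker(h + λ·id) and ℝ·ξ are pairwise g-orthogonal. -/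
theorem stmt_3
    {V : Type*} [AddCommGroup V] [Module ℝ V]
    (ξ : V) (η : V →ₗ[ℝ] ℝ) (φ h : V →ₗ[ℝ] V) (κ : ℝ)
    (hηξ : η ξ = 1)
    (hφ2 : ∀ v, φ (φ v) = v - η v • ξ)
    (hφξ : φ ξ = 0)
    (hηφ : ∀ v, η (φ v) = 0)
    (hhξ : h ξ = 0)
    (hηh : ∀ v, η (h v) = 0)
    (hhφ : ∀ v, h (φ v) = - φ (h v))
    (hh2 : ∀ v, h (h v) = (1 + κ) • φ (φ v))
    (g : V →ₗ[ℝ] V →ₗ[ℝ] ℝ)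
    (hgsymm : ∀ X Y, g X Y = g Y X)
    (hgφ : ∀ X Y, g (φ X) (φ Y) = - g X Y + η X * η Y)
    (hgskew : ∀ X Y, g X (φ Y) = - g (φ X) Y)
    (hgh : ∀ X Y, g (h X) Y = g X (h Y))
    [FiniteDimensional ℝ V] (n : ℕ)
    (hdim : Module.finrank ℝ V = 2 * n + 1)
    (hκ : -1 < κ)
    (lam : ℝ) (hlam : lam = Real.sqrt (1 + κ)) :
    Submodule.map φ (LinearMap.ker (h - lam • (LinearMap.id : V →ₗ[ℝ] V))) =
      LinearMap.ker (h + lam • (LinearMap.id : V →ₗ[ℝ] V)) ∧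
    (∀ x, h x = lam • x → φ x = 0 → x = 0) ∧
    Module.finrank ℝ (LinearMap.ker (h - lam • (LinearMap.id : V →ₗ[ℝ] V))) = n ∧
    Module.finrank ℝ (LinearMap.ker (h + lam • (LinearMap.id : V →ₗ[ℝ] V))) = n ∧
    (∀ x y, h x = lam • x → h y = (-lam) • y → g x y = 0) ∧
    (∀ x, h x = lam • x → g x ξ = 0) ∧
    (∀ y, h y = (-lam) • y → g y ξ = 0) := by
  have h1κ : (0:ℝ) < 1 + κ := by linarith
  have hlam0 : 0 < lam := by rw [hlam]; exact Real.sqrt_pos.mpr h1κ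
  have hlamne : lam ≠ 0 := ne_of_gt hlam0
  have hlamsq : lam * lam = 1 + κ := by rw [hlam]; exact Real.mul_self_sqrt h1κ.le
  set Kp := LinearMap.ker (h - lam • (LinearMap.id : V →ₗ[ℝ] V)) with hKp
  set Km := LinearMap.ker (h + lam • (LinearMap.id : V →ₗ[ℝ] V)) with hKm
  have memKp : ∀ x : V, x ∈ Kp ↔ h x = lam • x := by
    intro x
    simp only [hKp, LinearMap.mem_ker, LinearMap.sub_apply, LinearMap.smul_apply,
      LinearMap.id_apply, sub_eq_zero]
  have memKm : ∀ x : V, x ∈ Km ↔ h x = (-lam) • x := by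
    intro x
    simp only [hKm, LinearMap.mem_ker, LinearMap.add_apply, LinearMap.smul_apply,
      LinearMap.id_apply, neg_smul]
    constructor
    · intro hx; exact eq_neg_of_add_eq_zero_left hx
    · intro hx; rw [hx]; abel
  have ηP : ∀ x : V, h x = lam • x → η x = 0 := by
    intro x hx
    have h0 := hηh x
    rw [hx, map_smul, smul_eq_mul] at h0
    exact (mul_eq_zero.mp h0).resolve_left hlamne
  have ηM : ∀ x : V, h x = (-lam) • x → η x = 0 := by
    intro x hx
    have h0 := hηh x
    rw [hx, map_smul, smul_eq_mul] at h0
    have := (mul_eq_zero.mp h0).resolve_left (neg_ne_zero.mpr hlamne)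
    exact this
  have hinj : ∀ x : V, h x = lam • x → φ x = 0 → x = 0 := by
    intro x hx hφx
    have h0 := hφ2 x
    rw [hφx, map_zero, ηP x hx, zero_smul, sub_zero] at h0
    exact h0.symm
  have hmap : Submodule.map φ Kp = Km := by
    apply le_antisymm
    · rintro y ⟨x, hxKp, rfl⟩
      rw [memKm]
      have hx := (memKp x).1 hxKp
      rw [hhφ x, hx, map_smul, neg_smul]
    · intro y hy
      have hy' := (memKm y).1 hy
      have hηy : η y = 0 := ηM y hy'
      refine ⟨φ y, ?_, ?_⟩
      · show φ y ∈ Kp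
        rw [memKp, hhφ y, hy', map_smul, neg_smul, neg_neg]
      · rw [hφ2 y, hηy, zero_smul, sub_zero]
  have hfin : Module.finrank ℝ Kp = Module.finrank ℝ Km := by
    set f : Kp →ₗ[ℝ] V := φ ∘ₗ Kp.subtype with hf
    have hker : LinearMap.ker f = ⊥ := by
      rw [LinearMap.ker_eq_bot']
      rintro ⟨x, hx⟩ h0
      have : φ x = 0 := h0
      exact Subtype.ext (hinj x ((memKp x).1 hx) this)
    have hrange : LinearMap.range f = Km := by
      rw [hf, LinearMap.range_comp, Submodule.range_subtype, hmap]
    have := LinearMap.finrank_range_add_finrank_ker f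
    rw [hrange, hker, finrank_bot, add_zero] at this
    exact this.symm
  have hηker : Module.finrank ℝ (LinearMap.ker η) = 2 * n := by
    have hsurj : LinearMap.range η = ⊤ := by
      rw [LinearMap.range_eq_top]
      intro c
      exact ⟨c • ξ, by simp [hηξ]⟩
    have h2 := LinearMap.finrank_range_add_finrank_ker η
    rw [hsurj, finrank_top, Module.finrank_self, hdim] at h2
    omega
  have hinf : Kp ⊓ Km = ⊥ := by
    rw [eq_bot_iff]
    rintro x ⟨h1, h2⟩
    have e1 := (memKp x).1 h1
    have e2 := (memKm x).1 h2
    have e4 : lam • x = -(lam • x) := by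
      calc lam • x = h x := e1.symm
        _ = (-lam) • x := e2
        _ = -(lam • x) := neg_smul lam x
    have e3 : (lam + lam) • x = 0 := by
      rw [add_smul]
      nth_rewrite 2 [e4]
      abel
    have : x = 0 := by
      rcases smul_eq_zero.mp e3 with hc | hc
      · exact absurd hc (by positivity)
      · exact hc
    simp [this]
  have hsup : Kp ⊔ Km = LinearMap.ker η := by
    apply le_antisymm
    · apply sup_le
      · intro x hx; exact LinearMap.mem_ker.mpr (ηP x ((memKp x).1 hx))
      · intro x hx; exact LinearMap.mem_ker.mpr (ηM x ((memKm x).1 hx))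
    · intro v hv
      have hηv : η v = 0 := hv
      have hhh : h (h v) = (lam * lam) • v := by
        rw [hh2, hφ2, hηv, zero_smul, sub_zero, hlamsq]
      refine Submodule.mem_sup.mpr
        ⟨(2:ℝ)⁻¹ • (v + lam⁻¹ • h v), ?_, (2:ℝ)⁻¹ • (v - lam⁻¹ • h v), ?_, ?_⟩
      · rw [memKp]
        rw [map_smul, map_add, map_smul, hhh]
        match_scalars <;> field_simp
      · rw [memKm]
        rw [map_smul, map_sub, map_smul, hhh]
        match_scalars <;> field_simp <;> ring
      · match_scalars <;> norm_num
  have hsumdim := Submodule.finrank_sup_add_finrank_inf_eq Kp Km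
  rw [hsup, hinf, finrank_bot, add_zero, hηker, hfin] at hsumdim
  refine ⟨hmap, hinj, by omega, by omega, ?_, ?_, ?_⟩
  · intro x y hx hy
    have e := hgh x y
    rw [hx, hy, map_smul, map_smul, LinearMap.smul_apply, smul_eq_mul, smul_eq_mul] at e
    have : (lam + lam) * g x y = 0 := by linarith
    rcases mul_eq_zero.mp this with hc | hc
    · exact absurd hc (by positivity)
    · exact hc
  · intro x hx
    have e := hgh x ξ
    rw [hx, hhξ, map_smul, map_zero, LinearMap.smul_apply, smul_eq_mul] at e
    exact (mul_eq_zero.mp e).resolve_left hlamne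
  · intro y hy
    have e := hgh y ξ
    rw [hy, hhξ, map_smul, map_zero, LinearMap.smul_apply, smul_eq_mul] at e
    exact (mul_eq_zero.mp e).resolve_left (neg_ne_zero.mpr hlamne)
end

section
/- Assume κ > −1 and set λ := √(1+κ). Then ker(h − λ·id) = { x + λ^{−1}·h(x) : x ∈ V, φ(x) = −x } and ker(h + λ·id) = { x − λ^{−1}·h(x) : x ∈ V, φ(x) = x }. -/
/-!
Every eigenvector `v` of `h` lies in `ker η`, where `φ` is an involution. Since `h` anticommutes
with `φ`, it swaps the `±1`-eigenspaces of `φ`, so `v = x + c⁻¹ • h x` with `x = (v - φ v) / 2`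
in the `(-1)`-eigenspace. Conversely `h² = c²` on that eigenspace, hence `x + c⁻¹ • h x` is a
`c`-eigenvector. Replacing `(φ, λ)` by `(-φ, -λ)` turns the first description into the second.
-/

section Eigenspaces

variable {K V : Type*} [Field K] [AddCommGroup V] [Module K V]
  {ξ : V} {η : V →ₗ[K] K} {φ h : V →ₗ[K] V} {c : K}

theorem apply_add_inv_smul_eq_smul (hc : c ≠ 0)
    (hφ2 : ∀ v, φ (φ v) = v - η v • ξ) (hηφ : ∀ v, η (φ v) = 0)
    (hh2 : ∀ v, h (h v) = c ^ 2 • φ (φ v)) {x : V} (hx : φ x = -x) :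
    h (x + c⁻¹ • h x) = c • (x + c⁻¹ • h x) := by
  have hηx : η x = 0 := by simpa [hx] using hηφ x
  have hhx : h (h x) = c ^ 2 • x := by rw [hh2, hφ2, hηx, zero_smul, sub_zero]
  rw [map_add, map_smul, hhx]
  match_scalars <;> field_simp

theorem exists_eq_add_inv_smul_of_apply_eq_smul [NeZero (2 : K)] (hc : c ≠ 0)
    (hφ2 : ∀ v, φ (φ v) = v - η v • ξ) (hηh : ∀ v, η (h v) = 0)
    (hhφ : ∀ v, h (φ v) = -φ (h v)) {v : V} (hv : h v = c • v) :
    ∃ x, φ x = -x ∧ v = x + c⁻¹ • h x := by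
  have hηv : η v = 0 := by simpa [hv, hc] using hηh v
  refine ⟨(2 : K)⁻¹ • (v - φ v), ?_, ?_⟩
  · rw [map_smul, map_sub, hφ2, hηv]
    module
  · rw [map_smul, map_sub, hhφ, hv, map_smul]
    match_scalars <;> field_simp <;> ring

theorem coe_ker_sub_smul_id_eq [NeZero (2 : K)] (hc : c ≠ 0)
    (hφ2 : ∀ v, φ (φ v) = v - η v • ξ) (hηφ : ∀ v, η (φ v) = 0) (hηh : ∀ v, η (h v) = 0)
    (hhφ : ∀ v, h (φ v) = -φ (h v)) (hh2 : ∀ v, h (h v) = c ^ 2 • φ (φ v)) :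
    (LinearMap.ker (h - c • LinearMap.id) : Set V) =
      {v : V | ∃ x : V, φ x = -x ∧ v = x + c⁻¹ • h x} := by
  ext v
  simp only [SetLike.mem_coe, LinearMap.mem_ker, LinearMap.sub_apply, LinearMap.smul_apply,
    LinearMap.id_apply, sub_eq_zero, Set.mem_ofPred_eq]
  constructor
  · exact exists_eq_add_inv_smul_of_apply_eq_smul hc hφ2 hηh hhφ
  · rintro ⟨x, hx, rfl⟩
    exact apply_add_inv_smul_eq_smul hc hφ2 hηφ hh2 hx

end Eigenspaces

theorem stmt_4_general
    {V : Type*} [AddCommGroup V] [Module ℝ V]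
    (ξ : V) (η : V →ₗ[ℝ] ℝ) (φ h : V →ₗ[ℝ] V) (κ : ℝ)
    (hφ2 : ∀ v, φ (φ v) = v - η v • ξ)
    (hηφ : ∀ v, η (φ v) = 0)
    (hηh : ∀ v, η (h v) = 0)
    (hhφ : ∀ v, h (φ v) = - φ (h v))
    (hh2 : ∀ v, h (h v) = (1 + κ) • φ (φ v))
    (hκ : -1 < κ)
    (lam : ℝ) (hlam : lam = Real.sqrt (1 + κ)) :
    ((LinearMap.ker (h - lam • (LinearMap.id : V →ₗ[ℝ] V)) : Set V) =
      {v : V | ∃ x : V, φ x = -x ∧ v = x + lam⁻¹ • h x}) ∧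
    ((LinearMap.ker (h + lam • (LinearMap.id : V →ₗ[ℝ] V)) : Set V) =
      {v : V | ∃ x : V, φ x = x ∧ v = x - lam⁻¹ • h x}) := by
  have hκ' : 0 < 1 + κ := by linarith
  have hlam0 : lam ≠ 0 := by rw [hlam]; exact (Real.sqrt_pos.mpr hκ').ne'
  have hlam2 : lam ^ 2 = 1 + κ := by rw [hlam]; exact Real.sq_sqrt hκ'.le
  refine ⟨coe_ker_sub_smul_id_eq hlam0 hφ2 hηφ hηh hhφ (by simpa [hlam2] using hh2), ?_⟩
  have hneg := coe_ker_sub_smul_id_eq (φ := -φ) (neg_ne_zero.mpr hlam0)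
    (by simpa using hφ2) (by simpa using hηφ) hηh (fun v => by simp [hhφ])
    (by simpa [neg_sq, hlam2] using hh2)
  rw [neg_smul, sub_neg_eq_add] at hneg
  simpa [inv_neg, neg_smul, ← sub_eq_add_neg] using hneg

theorem stmt_4
    {V : Type*} [AddCommGroup V] [Module ℝ V]
    (ξ : V) (η : V →ₗ[ℝ] ℝ) (φ h : V →ₗ[ℝ] V) (κ : ℝ)
    (hηξ : η ξ = 1)
    (hφ2 : ∀ v, φ (φ v) = v - η v • ξ)
    (hφξ : φ ξ = 0)
    (hηφ : ∀ v, η (φ v) = 0)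
    (hhξ : h ξ = 0)
    (hηh : ∀ v, η (h v) = 0)
    (hhφ : ∀ v, h (φ v) = - φ (h v))
    (hh2 : ∀ v, h (h v) = (1 + κ) • φ (φ v))
    (hκ : -1 < κ)
    (lam : ℝ) (hlam : lam = Real.sqrt (1 + κ)) :
    ((LinearMap.ker (h - lam • (LinearMap.id : V →ₗ[ℝ] V)) : Set V) =
      {v : V | ∃ x : V, φ x = -x ∧ v = x + lam⁻¹ • h x}) ∧
    ((LinearMap.ker (h + lam • (LinearMap.id : V →ₗ[ℝ] V)) : Set V) =
      {v : V | ∃ x : V, φ x = x ∧ v = x - lam⁻¹ • h x}) :=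
  stmt_4_general ξ η φ h κ hφ2 hηφ hηh hhφ hh2 hκ lam hlam
end

section
/- Assume κ > −1 and set λ := √(1+κ). Then the ±1-eigenspaces of φ are parametrized by the eigenspaces of h: { v ∈ V : φ(v) = v } = { x + φ(x) : x ∈ V, h(x) = λ·x } and { v ∈ V : φ(v) = −v } = { x − φ(x) : x ∈ V, h(x) = −λ·x }. -/
section ParacontactEigenspaces

variable {V : Type*} [AddCommGroup V] [Module ℝ V] {ξ : V} {η : V →ₗ[ℝ] ℝ} {φ h : V →ₗ[ℝ] V}
  {c : ℝ}

theorem eq_zero_of_apply_eq_smul (hηh : ∀ v, η (h v) = 0) (hc : c ≠ 0) {x : V}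
    (hx : h x = c • x) : η x = 0 := by
  have : c * η x = 0 := by rw [← smul_eq_mul, ← map_smul, ← hx, hηh]
  exact (mul_eq_zero.mp this).resolve_left hc

/-- Since `h (h v) = c² • v` and `φ (h v) = -h v`, the vector `v ± c⁻¹ • h v` is a
`±c`-eigenvector of `h`; the witness is `x = (v + c⁻¹ • h v) / 2`. -/
theorem exists_eigenvector_add_apply_eq (hhφ : ∀ v, h (φ v) = -φ (h v))
    (hh2 : ∀ v, h (h v) = (c * c) • φ (φ v)) (hc : c ≠ 0) {v : V} (hv : φ v = v) :
    ∃ x, h x = c • x ∧ v = x + φ x := by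
  have hhh : h (h v) = (c * c) • v := by rw [hh2, hv, hv]
  have hφh : φ (h v) = -h v := by rw [← neg_eq_iff_eq_neg, ← hhφ, hv]
  refine ⟨(2⁻¹ : ℝ) • v + (2 * c)⁻¹ • h v, ?_, ?_⟩
  · rw [map_add, map_smul, map_smul, hhh]
    match_scalars <;> field_simp
  · rw [map_add, map_smul, map_smul, hv, hφh]
    match_scalars <;> field_simp <;> ring

theorem apply_add_apply_eq_of_apply_eq_smul (hφ2 : ∀ v, φ (φ v) = v - η v • ξ)
    (hηh : ∀ v, η (h v) = 0) (hc : c ≠ 0) {x : V} (hx : h x = c • x) :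
    φ (x + φ x) = x + φ x := by
  rw [map_add, hφ2, eq_zero_of_apply_eq_smul hηh hc hx, zero_smul, sub_zero, add_comm]

theorem setOf_apply_eq_self_eq (hφ2 : ∀ v, φ (φ v) = v - η v • ξ) (hηh : ∀ v, η (h v) = 0)
    (hhφ : ∀ v, h (φ v) = -φ (h v)) (hh2 : ∀ v, h (h v) = (c * c) • φ (φ v)) (hc : c ≠ 0) :
    {v : V | φ v = v} = {w : V | ∃ x : V, h x = c • x ∧ w = x + φ x} := by
  ext v
  constructor
  · exact exists_eigenvector_add_apply_eq hhφ hh2 hc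
  · rintro ⟨x, hx, rfl⟩
    exact apply_add_apply_eq_of_apply_eq_smul hφ2 hηh hc hx

end ParacontactEigenspaces

theorem stmt_5_general
    {V : Type*} [AddCommGroup V] [Module ℝ V]
    (ξ : V) (η : V →ₗ[ℝ] ℝ) (φ h : V →ₗ[ℝ] V) (κ : ℝ)
    (hφ2 : ∀ v, φ (φ v) = v - η v • ξ)
    (hηh : ∀ v, η (h v) = 0)
    (hhφ : ∀ v, h (φ v) = - φ (h v))
    (hh2 : ∀ v, h (h v) = (1 + κ) • φ (φ v))
    (hκ : -1 < κ)
    (lam : ℝ) (hlam : lam = Real.sqrt (1 + κ)) :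
    ({v : V | φ v = v} = {w : V | ∃ x : V, h x = lam • x ∧ w = x + φ x}) ∧
    ({v : V | φ v = -v} = {w : V | ∃ x : V, h x = (-lam) • x ∧ w = x - φ x}) := by
  have hlam_ne : lam ≠ 0 := hlam ▸ (Real.sqrt_pos.mpr (by linarith)).ne'
  have hh2' : ∀ v, h (h v) = (lam * lam) • φ (φ v) := by
    rw [hlam, Real.mul_self_sqrt (by linarith)]
    exact hh2
  refine ⟨setOf_apply_eq_self_eq hφ2 hηh hhφ hh2' hlam_ne, ?_⟩
  -- `(-φ, -h)` satisfy the same identities, and `-h` has eigenvalue `lam` where `h` has `-lam`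
  have := setOf_apply_eq_self_eq (φ := -φ) (h := -h) (by simpa using hφ2) (by simpa using hηh)
    (by simpa using hhφ) (by simpa using hh2') hlam_ne
  simpa only [LinearMap.neg_apply, neg_eq_iff_eq_neg, neg_smul, ← sub_eq_add_neg] using this

theorem stmt_5
    {V : Type*} [AddCommGroup V] [Module ℝ V]
    (ξ : V) (η : V →ₗ[ℝ] ℝ) (φ h : V →ₗ[ℝ] V) (κ : ℝ)
    (hηξ : η ξ = 1)
    (hφ2 : ∀ v, φ (φ v) = v - η v • ξ)
    (hφξ : φ ξ = 0)
    (hηφ : ∀ v, η (φ v) = 0)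
    (hhξ : h ξ = 0)
    (hηh : ∀ v, η (h v) = 0)
    (hhφ : ∀ v, h (φ v) = - φ (h v))
    (hh2 : ∀ v, h (h v) = (1 + κ) • φ (φ v))
    (hκ : -1 < κ)
    (lam : ℝ) (hlam : lam = Real.sqrt (1 + κ)) :
    ({v : V | φ v = v} = {w : V | ∃ x : V, h x = lam • x ∧ w = x + φ x}) ∧
    ({v : V | φ v = -v} = {w : V | ∃ x : V, h x = (-lam) • x ∧ w = x - φ x}) :=
  stmt_5_general ξ η φ h κ hφ2 hηh hhφ hh2 hκ lam hlam
end

section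
/- Assume κ < −1, set λ := √(−1−κ), and assume dim V = 2n+1. Then φ anticommutes with φ∘h, the map φ∘h is g-self-adjoint, and φ restricts to a linear isomorphism of ker(φ∘h − λ·id) onto ker(φ∘h + λ·id); in particular dim ker(φ∘h − λ·id) = dim ker(φ∘h + λ·id) = n. Moreover the three subspaces ker(φ∘h − λ·id), ker(φ∘h + λ·id) and ℝ·ξ are pairwise g-orthogonal. -/
theorem stmt_7
    {V : Type*} [AddCommGroup V] [Module ℝ V]
    (ξ : V) (η : V →ₗ[ℝ] ℝ) (φ h : V →ₗ[ℝ] V) (κ : ℝ)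
    (hηξ : η ξ = 1)
    (hφ2 : ∀ v, φ (φ v) = v - η v • ξ)
    (hφξ : φ ξ = 0)
    (hηφ : ∀ v, η (φ v) = 0)
    (hhξ : h ξ = 0)
    (hηh : ∀ v, η (h v) = 0)
    (hhφ : ∀ v, h (φ v) = - φ (h v))
    (hh2 : ∀ v, h (h v) = (1 + κ) • φ (φ v))
    (g : V →ₗ[ℝ] V →ₗ[ℝ] ℝ)
    (hgsymm : ∀ X Y, g X Y = g Y X)
    (hgφ : ∀ X Y, g (φ X) (φ Y) = - g X Y + η X * η Y)
    (hgskew : ∀ X Y, g X (φ Y) = - g (φ X) Y)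
    (hgh : ∀ X Y, g (h X) Y = g X (h Y))
    [FiniteDimensional ℝ V] (n : ℕ)
    (hdim : Module.finrank ℝ V = 2 * n + 1)
    (hκ : κ < -1)
    (lam : ℝ) (hlam : lam = Real.sqrt (-1 - κ)) :
    (∀ v, φ (φ (h v)) = - φ (h (φ v))) ∧
    (∀ X Y, g (φ (h X)) Y = g X (φ (h Y))) ∧
    Submodule.map φ (LinearMap.ker (φ ∘ₗ h - lam • (LinearMap.id : V →ₗ[ℝ] V))) =
      LinearMap.ker (φ ∘ₗ h + lam • (LinearMap.id : V →ₗ[ℝ] V)) ∧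
    (∀ x, φ (h x) = lam • x → φ x = 0 → x = 0) ∧
    Module.finrank ℝ (LinearMap.ker (φ ∘ₗ h - lam • (LinearMap.id : V →ₗ[ℝ] V))) = n ∧
    Module.finrank ℝ (LinearMap.ker (φ ∘ₗ h + lam • (LinearMap.id : V →ₗ[ℝ] V))) = n ∧
    (∀ x y, φ (h x) = lam • x → φ (h y) = (-lam) • y → g x y = 0) ∧
    (∀ x, φ (h x) = lam • x → g x ξ = 0) ∧
    (∀ y, φ (h y) = (-lam) • y → g y ξ = 0) := by
  have hlam2 : lam * lam = -1 - κ := by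
    rw [hlam]; exact Real.mul_self_sqrt (by linarith)
  have hlampos : 0 < lam := by
    rw [hlam]; exact Real.sqrt_pos.mpr (by linarith)
  have hlamne : lam ≠ 0 := ne_of_gt hlampos
  set A : V →ₗ[ℝ] V := φ ∘ₗ h with hA
  have hAv : ∀ v, A v = φ (h v) := fun v => rfl
  have hAξ : A ξ = 0 := by simp [hAv, hhξ]
  have hηA : ∀ v, η (A v) = 0 := fun v => hηφ (h v)
  have hAφ : ∀ v, A (φ v) = - φ (A v) := by
    intro v; rw [hAv, hAv, hhφ v, map_neg]
  -- A² formula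
  have hA2 : ∀ v, A (A v) = (lam * lam) • (v - η v • ξ) := by
    intro v
    rw [hAv, hAv, hhφ (h v), map_neg, hφ2, hηh, zero_smul, sub_zero, hh2, hφ2, hlam2]
    module
  -- eigenvectors are in ker η
  have hηeig : ∀ (c : ℝ) (x : V), c ≠ 0 → A x = c • x → η x = 0 := by
    intro c x hc hx
    have := hηA x
    rw [hx, map_smul, smul_eq_mul] at this
    exact (mul_eq_zero.mp this).resolve_left hc
  -- membership characterizations
  have memp : ∀ x, x ∈ LinearMap.ker (A - lam • (LinearMap.id : V →ₗ[ℝ] V)) ↔ A x = lam • x := by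
    intro x
    rw [LinearMap.mem_ker, LinearMap.sub_apply, LinearMap.smul_apply, LinearMap.id_apply,
      sub_eq_zero]
  have memm : ∀ x, x ∈ LinearMap.ker (A + lam • (LinearMap.id : V →ₗ[ℝ] V)) ↔ A x = -(lam • x) := by
    intro x
    rw [LinearMap.mem_ker, LinearMap.add_apply, LinearMap.smul_apply, LinearMap.id_apply,
      add_eq_zero_iff_eq_neg]
  set Kp := LinearMap.ker (A - lam • (LinearMap.id : V →ₗ[ℝ] V)) with hKp
  set Km := LinearMap.ker (A + lam • (LinearMap.id : V →ₗ[ℝ] V)) with hKm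
  set S : Submodule ℝ V := Submodule.span ℝ {ξ} with hS
  -- item 1
  have anti : ∀ v, φ (φ (h v)) = - φ (h (φ v)) := by
    intro v; rw [hhφ v, map_neg, neg_neg]
  -- item 2
  have selfadj : ∀ X Y, g (φ (h X)) Y = g X (φ (h Y)) := by
    intro X Y
    have h1 := hgskew (h X) Y
    have h2 := hgh X (φ Y)
    rw [hhφ, (g X).map_neg] at h2
    linarith
  -- map φ Kp = Km
  have hmap1 : Submodule.map φ Kp = Km := by
    apply le_antisymm
    · rintro y ⟨x, hx, rfl⟩
      have hx' := (memp x).mp hx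
      rw [memm, hAφ, hx', map_smul]
    · intro y hy
      have hy' := (memm y).mp hy
      have hηy : η y = 0 := by
        have := hηA y
        rw [hy', map_neg, map_smul, smul_eq_mul, neg_eq_zero] at this
        exact (mul_eq_zero.mp this).resolve_left hlamne
      refine ⟨φ y, (memp _).mpr ?_, ?_⟩
      · rw [hAφ, hy', map_neg, map_smul, neg_neg]
      · rw [hφ2, hηy, zero_smul, sub_zero]
  have hmap2 : Submodule.map φ Km = Kp := by
    apply le_antisymm
    · rintro y ⟨x, hx, rfl⟩
      have hx' := (memm x).mp hx
      rw [memp, hAφ, hx', map_neg, map_smul, neg_neg]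
    · intro y hy
      have hy' := (memp y).mp hy
      have hηy : η y = 0 := hηeig lam y hlamne hy'
      refine ⟨φ y, (memm _).mpr ?_, ?_⟩
      · rw [hAφ, hy', map_smul]
      · rw [hφ2, hηy, zero_smul, sub_zero]
  -- injectivity
  have inj : ∀ x, φ (h x) = lam • x → φ x = 0 → x = 0 := by
    intro x hx hφx
    have hηx : η x = 0 := hηeig lam x hlamne hx
    have := hφ2 x
    rw [hφx, map_zero, hηx, zero_smul, sub_zero] at this
    exact this.symm
  -- equal finranks
  have hfeq : Module.finrank ℝ Kp = Module.finrank ℝ Km := by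
    apply le_antisymm
    · rw [← hmap2]; exact Submodule.finrank_map_le φ Km
    · rw [← hmap1]; exact Submodule.finrank_map_le φ Kp
  -- Kp ⊓ Km = ⊥
  have hinf1 : Kp ⊓ Km = ⊥ := by
    rw [Submodule.eq_bot_iff]
    intro x hx
    rw [Submodule.mem_inf] at hx
    have hx1 := (memp x).mp hx.1
    have hx2 := (memm x).mp hx.2
    have : (2 * lam) • x = 0 := by
      have := hx1.symm.trans hx2
      rw [eq_neg_iff_add_eq_zero] at this
      rw [← this]; module
    rcases smul_eq_zero.mp this with hc | hx
    · exact absurd hc (by positivity)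
    · exact hx
  -- Kp, Km ≤ ker η
  have hKpη : Kp ≤ LinearMap.ker η := by
    intro x hx; exact hηeig lam x hlamne ((memp x).mp hx)
  have hKmη : Km ≤ LinearMap.ker η := by
    intro x hx
    have hx' := (memm x).mp hx
    have := hηA x
    rw [hx', map_neg, map_smul, smul_eq_mul, neg_eq_zero] at this
    exact (mul_eq_zero.mp this).resolve_left hlamne
  have hinf2 : (Kp ⊔ Km) ⊓ S = ⊥ := by
    rw [Submodule.eq_bot_iff]
    intro x hx
    rw [Submodule.mem_inf] at hx
    obtain ⟨hx1, hx2⟩ := hx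
    rcases Submodule.mem_span_singleton.mp hx2 with ⟨c, rfl⟩
    have hη : η (c • ξ) = 0 := sup_le hKpη hKmη hx1
    rw [map_smul, hηξ, smul_eq_mul, mul_one] at hη
    rw [hη, zero_smul]
  have hAker : ∀ v, A (v - η v • ξ) = A v := by
    intro v; rw [map_sub, map_smul, hAξ, smul_zero, sub_zero]
  have hsup : (Kp ⊔ Km) ⊔ S = ⊤ := by
    rw [eq_top_iff]
    intro v _
    have hvp : (2 * lam)⁻¹ • (A v + lam • (v - η v • ξ)) ∈ Kp := by
      rw [memp, map_smul, map_add, hA2, map_smul, hAker]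
      match_scalars <;> field_simp <;> ring
    have hvm : (2 * lam)⁻¹ • (lam • (v - η v • ξ) - A v) ∈ Km := by
      rw [memm, map_smul, map_sub, map_smul, hAker, hA2]
      match_scalars <;> field_simp <;> ring
    have hvs : η v • ξ ∈ S := Submodule.smul_mem _ _ (Submodule.mem_span_singleton_self ξ)
    have hdecomp : v = (2 * lam)⁻¹ • (A v + lam • (v - η v • ξ)) +
        (2 * lam)⁻¹ • (lam • (v - η v • ξ) - A v) + η v • ξ := by
      match_scalars <;> field_simp <;> ring
    rw [hdecomp]
    exact Submodule.add_mem _ (Submodule.add_mem _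
      (Submodule.mem_sup_left (Submodule.mem_sup_left hvp))
      (Submodule.mem_sup_left (Submodule.mem_sup_right hvm)))
      (Submodule.mem_sup_right hvs)
  have hξne : ξ ≠ 0 := by
    intro hx; rw [hx, map_zero] at hηξ; simp at hηξ
  have hSdim : Module.finrank ℝ S = 1 := finrank_span_singleton hξne
  have d1 : Module.finrank ℝ (Kp ⊔ Km : Submodule ℝ V) =
      Module.finrank ℝ Kp + Module.finrank ℝ Km := by
    have := Submodule.finrank_sup_add_finrank_inf_eq Kp Km
    rw [hinf1, finrank_bot] at this
    omega
  have d2 : Module.finrank ℝ ((Kp ⊔ Km) ⊔ S : Submodule ℝ V) =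
      Module.finrank ℝ (Kp ⊔ Km : Submodule ℝ V) + 1 := by
    have := Submodule.finrank_sup_add_finrank_inf_eq (Kp ⊔ Km) S
    rw [hinf2, finrank_bot, hSdim] at this
    omega
  have d3 : Module.finrank ℝ ((Kp ⊔ Km) ⊔ S : Submodule ℝ V) = 2 * n + 1 := by
    rw [hsup, finrank_top, hdim]
  have hKpn : Module.finrank ℝ Kp = n := by omega
  refine ⟨anti, selfadj, hmap1, inj, hKpn, by omega, ?_, ?_, ?_⟩
  · intro x y hx hy
    have h1 := selfadj x y
    simp only [hx, hy, map_smul, map_neg, LinearMap.smul_apply, LinearMap.neg_apply,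
      smul_eq_mul] at h1
    have : (2 * lam) * g x y = 0 := by linarith
    rcases mul_eq_zero.mp this with hc | hg
    · exact absurd hc (by positivity)
    · exact hg
  · intro x hx
    have h1 := selfadj x ξ
    simp only [hx, hhξ, map_zero, map_smul, LinearMap.smul_apply, smul_eq_mul] at h1
    rcases mul_eq_zero.mp h1 with hc | hg
    · exact absurd hc hlamne
    · exact hg
  · intro y hy
    have h1 := selfadj y ξ
    simp only [hy, hhξ, map_zero, map_neg, map_smul, LinearMap.smul_apply,
      LinearMap.neg_apply, smul_eq_mul] at h1
    have : -(lam * g y ξ) = 0 := by linarith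
    rw [neg_eq_zero] at this
    rcases mul_eq_zero.mp this with hc | hg
    · exact absurd hc hlamne
    · exact hg
end

section
/- Assume κ ≠ −1 and that g is nondegenerate. Let D⁺ := { v ∈ V : φ(v) = v } and D⁻ := { v ∈ V : φ(v) = −v }. Then the symmetric bilinear form (X,X′) ↦ g(h(X),X′) is nondegenerate on D⁺, and likewise the form (Y,Y′) ↦ g(h(Y),Y′) is nondegenerate on D⁻. (This is the pointwise content of the statement that the canonical Legendre foliations D⁺ and D⁻ of a paracontact (κ,μ)-manifold with κ ≠ −1 are non-degenerate, since their Pang invariants equal 2g(h·,·).) -/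
theorem stmt_9
    {V : Type*} [AddCommGroup V] [Module ℝ V]
    (ξ : V) (η : V →ₗ[ℝ] ℝ) (φ h : V →ₗ[ℝ] V) (κ : ℝ)
    (hηξ : η ξ = 1)
    (hφ2 : ∀ v, φ (φ v) = v - η v • ξ)
    (hφξ : φ ξ = 0)
    (hηφ : ∀ v, η (φ v) = 0)
    (hhξ : h ξ = 0)
    (hηh : ∀ v, η (h v) = 0)
    (hhφ : ∀ v, h (φ v) = - φ (h v))
    (hh2 : ∀ v, h (h v) = (1 + κ) • φ (φ v))
    (g : V →ₗ[ℝ] V →ₗ[ℝ] ℝ)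
    (hgsymm : ∀ X Y, g X Y = g Y X)
    (hgφ : ∀ X Y, g (φ X) (φ Y) = - g X Y + η X * η Y)
    (hgskew : ∀ X Y, g X (φ Y) = - g (φ X) Y)
    (hgh : ∀ X Y, g (h X) Y = g X (h Y))
    (hκ : κ ≠ -1)
    (hgnd : ∀ v : V, (∀ w, g v w = 0) → v = 0) :
    (∀ X, φ X = X → (∀ X', φ X' = X' → g (h X) X' = 0) → X = 0) ∧
    (∀ Y, φ Y = -Y → (∀ Y', φ Y' = -Y' → g (h Y) Y' = 0) → Y = 0) := by
  have hκ' : (1 : ℝ) + κ ≠ 0 := by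
    intro hc; apply hκ; linarith
  -- g vanishes on pairs of eigenvectors of the same eigenvalue (with η = 0)
  have dpos : ∀ a b, φ a = a → φ b = b → η a = 0 → η b = 0 → g a b = 0 := by
    intro a b ha hb ha0 hb0
    have := hgφ a b
    rw [ha, hb, ha0, hb0] at this
    linarith
  have dneg : ∀ a b, φ a = -a → φ b = -b → η a = 0 → η b = 0 → g a b = 0 := by
    intro a b ha hb ha0 hb0
    have := hgφ a b
    rw [ha, hb, ha0, hb0, map_neg, map_neg] at this
    simp at this
    linarith
  -- decomposition of any vector
  have decomp : ∀ v : V, ∃ p m : V, φ p = p ∧ φ m = -m ∧ η p = 0 ∧ η m = 0 ∧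
      v = η v • ξ + p + m := by
    intro v
    refine ⟨(2:ℝ)⁻¹ • (v - η v • ξ + φ v), (2:ℝ)⁻¹ • (v - η v • ξ - φ v), ?_, ?_, ?_, ?_, ?_⟩
    · rw [map_smul, map_add, map_sub, map_smul, hφξ, hφ2]
      module
    · rw [map_smul, map_sub, map_sub, map_smul, hφξ, hφ2]
      module
    · rw [map_smul, map_add, map_sub, map_smul, hηξ, hηφ]
      simp
    · rw [map_smul, map_sub, map_sub, map_smul, hηξ, hηφ]
      simp
    · module
  -- injectivity of h on η = 0 vectors
  have hinj : ∀ v : V, η v = 0 → h v = 0 → v = 0 := by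
    intro v hv0 hhv
    have := hh2 v
    rw [hhv, map_zero, hφ2, hv0, zero_smul, sub_zero] at this
    have := (smul_eq_zero.mp this.symm).resolve_left hκ'
    exact this
  constructor
  · intro X hXφ hXorth
    have hηX : η X = 0 := by rw [← hXφ]; exact hηφ X
    have hφhX : φ (h X) = - h X := by
      have := hhφ X
      rw [hXφ] at this
      exact neg_eq_iff_eq_neg.mp this.symm
    have hzero : h X = 0 := by
      apply hgnd
      intro w
      obtain ⟨p, m, hp, hm, hp0, hm0, hw⟩ := decomp w
      rw [hw, map_add, map_add, map_smul]
      have h1 : g (h X) ξ = 0 := by rw [hgh, hhξ, map_zero]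
      have h2 : g (h X) p = 0 := hXorth p hp
      have h3 : g (h X) m = 0 := dneg (h X) m hφhX hm (hηh X) hm0
      rw [h1, h2, h3]; simp
    exact hinj X hηX hzero
  · intro Y hYφ hYorth
    have hηY : η Y = 0 := by
      have := hηφ Y
      rw [hYφ, map_neg] at this
      linarith
    have hφhY : φ (h Y) = h Y := by
      have := hhφ Y
      rw [hYφ, map_neg] at this
      exact (neg_injective this).symm
    have hzero : h Y = 0 := by
      apply hgnd
      intro w
      obtain ⟨p, m, hp, hm, hp0, hm0, hw⟩ := decomp w
      rw [hw, map_add, map_add, map_smul]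
      have h1 : g (h Y) ξ = 0 := by rw [hgh, hhξ, map_zero]
      have h2 : g (h Y) p = 0 := dpos (h Y) p hφhY hp (hηh Y) hp0
      have h3 : g (h Y) m = 0 := hYorth m hm
      rw [h1, h2, h3]; simp
    exact hinj Y hηY hzero
end

section
/- Assume κ > −1 and set λ := √(1+κ). Let D⁺ := { v ∈ V : φ(v) = v }. Then the symmetric bilinear form (X,X′) ↦ g(h(X),X′) on D⁺ is positive definite if and only if the restriction of g to ker(h − λ·id) is positive definite, and it is negative definite if and only if the restriction of g to ker(h − λ·id) is negative definite. -/
theorem stmt_10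
    {V : Type*} [AddCommGroup V] [Module ℝ V]
    (ξ : V) (η : V →ₗ[ℝ] ℝ) (φ h : V →ₗ[ℝ] V) (κ : ℝ)
    (hηξ : η ξ = 1)
    (hφ2 : ∀ v, φ (φ v) = v - η v • ξ)
    (hφξ : φ ξ = 0)
    (hηφ : ∀ v, η (φ v) = 0)
    (hhξ : h ξ = 0)
    (hηh : ∀ v, η (h v) = 0)
    (hhφ : ∀ v, h (φ v) = - φ (h v))
    (hh2 : ∀ v, h (h v) = (1 + κ) • φ (φ v))
    (g : V →ₗ[ℝ] V →ₗ[ℝ] ℝ)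
    (hgsymm : ∀ X Y, g X Y = g Y X)
    (hgφ : ∀ X Y, g (φ X) (φ Y) = - g X Y + η X * η Y)
    (hgskew : ∀ X Y, g X (φ Y) = - g (φ X) Y)
    (hgh : ∀ X Y, g (h X) Y = g X (h Y))
    (hκ : -1 < κ)
    (lam : ℝ) (hlam : lam = Real.sqrt (1 + κ)) :
    ((∀ X, φ X = X → X ≠ 0 → 0 < g (h X) X) ↔
      (∀ x, h x = lam • x → x ≠ 0 → 0 < g x x)) ∧
    ((∀ X, φ X = X → X ≠ 0 → g (h X) X < 0) ↔
      (∀ x, h x = lam • x → x ≠ 0 → g x x < 0)) := by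
  have hκ' : (0:ℝ) < 1 + κ := by linarith
  have hlampos : 0 < lam := by rw [hlam]; exact Real.sqrt_pos.mpr hκ'
  have hlam2 : lam * lam = 1 + κ := by rw [hlam]; exact Real.mul_self_sqrt hκ'.le
  -- Lemma A : eigenvector → element of D⁺
  have lemA : ∀ x, h x = lam • x → x ≠ 0 →
      ∃ X, φ X = X ∧ X ≠ 0 ∧ g (h X) X = (2*lam) * g x x := by
    intro x hx hx0
    have hηx : η x = 0 := by
      have h1 := hηh x
      rw [hx, map_smul, smul_eq_mul] at h1
      exact (mul_eq_zero.mp h1).resolve_left hlampos.ne'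
    have hgxφx : g x (φ x) = 0 := by
      have h1 := hgskew x x
      have h2 := hgsymm (φ x) x
      linarith
    have hgφφ : g (φ x) (φ x) = - g x x := by
      have := hgφ x x; rw [hηx] at this; linarith
    have hφφx : φ (φ x) = x := by rw [hφ2, hηx, zero_smul, sub_zero]
    have hhφx : h (φ x) = - (lam • φ x) := by
      rw [hhφ, hx, map_smul]
    refine ⟨x + φ x, ?_, ?_, ?_⟩
    · rw [map_add, hφφx, add_comm]
    · intro hX0
      have hφx : φ x = -x := eq_neg_of_add_eq_zero_right hX0
      have h1 : h (φ x) = -(lam • x) := by rw [hφx, map_neg, hx]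
      have h2 : h (φ x) = lam • x := by rw [hhφx, hφx, smul_neg, neg_neg]
      have h3 : (2 * lam) • x = 0 := by
        have h5 : lam • x = -(lam • x) := h2.symm.trans h1
        rw [two_mul, add_smul]
        nth_rewrite 1 [h5]
        exact neg_add_cancel _
      have : x = 0 := by
        have h4 : (2 * lam) ≠ 0 := by positivity
        exact (smul_eq_zero.mp h3).resolve_left h4
      exact hx0 this
    · have expand : g (h (x + φ x)) (x + φ x)
          = g (h x) x + g (h x) (φ x) + g (h (φ x)) x + g (h (φ x)) (φ x) := by
        simp [map_add]
        ring
      rw [expand, hx, hhφx]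
      simp only [map_smul, map_neg, LinearMap.smul_apply, LinearMap.neg_apply, smul_eq_mul]
      have hgφxx : g (φ x) x = 0 := by rw [hgsymm]; exact hgxφx
      rw [hgxφx, hgφxx, hgφφ]
      ring
  -- Lemma B : element of D⁺ → eigenvector
  have lemB : ∀ X, φ X = X → X ≠ 0 →
      ∃ x, h x = lam • x ∧ x ≠ 0 ∧ g (h X) X = (2*lam) * g x x := by
    intro X hX hX0
    have hηX : η X = 0 := by
      have := hηφ X; rwa [hX] at this
    have hgXX : g X X = 0 := by
      have := hgφ X X; rw [hX, hηX] at this; linarith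
    have hφφX : φ (φ X) = X := by rw [hφ2, hηX, zero_smul, sub_zero]
    have hhhX : h (h X) = (1 + κ) • X := by rw [hh2, hφφX]
    have hghh : g (h X) (h X) = 0 := by
      rw [hgh, hhhX, map_smul, smul_eq_mul, hgXX, mul_zero]
    set x : V := (2 * lam)⁻¹ • (h X + lam • X) with hxdef
    have h2lam : (2 * lam) ≠ 0 := by positivity
    have heig : h x = lam • x := by
      rw [hxdef, map_smul, map_add, map_smul, hhhX, ← hlam2]
      module
    refine ⟨x, heig, ?_, ?_⟩
    · intro hx0
      have hsum : h X + lam • X = 0 := by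
        rw [hxdef] at hx0
        rcases smul_eq_zero.mp hx0 with h1 | h1
        · exact absurd (inv_eq_zero.mp h1) h2lam
        · exact h1
      have hhXeq : h X = -(lam • X) := by
        linear_combination (norm := abel) hsum
      -- but also h X = lam • X
      have h1 : h X = lam • X := by
        calc h X = h (φ X) := by rw [hX]
        _ = - φ (h X) := hhφ X
        _ = - φ (-(lam • X)) := by rw [hhXeq]
        _ = lam • φ X := by rw [map_neg, neg_neg, map_smul]
        _ = lam • X := by rw [hX]
      have h3 : (2 * lam) • X = 0 := by
        have h4 : lam • X + lam • X = 0 := by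
          nth_rewrite 1 [← h1]; rw [hhXeq]; abel
        rw [two_mul, add_smul]; exact h4
      exact hX0 ((smul_eq_zero.mp h3).resolve_left h2lam)
    · have hgXhX : g X (h X) = g (h X) X := by rw [hgsymm]
      have expand : g x x = (2*lam)⁻¹ * ((2*lam)⁻¹ *
          (g (h X) (h X) + lam * g (h X) X + lam * g X (h X) + lam * (lam * g X X))) := by
        rw [hxdef]
        simp [map_add, map_smul, smul_eq_mul]
        ring
      rw [expand, hghh, hgXX, hgXhX]
      field_simp
      ring
  constructor
  · constructor
    · intro H x hx hx0
      obtain ⟨X, h1, h2, h3⟩ := lemA x hx hx0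
      have := H X h1 h2
      rw [h3] at this
      nlinarith
    · intro H X h1 h2
      obtain ⟨x, hx, hx0, h3⟩ := lemB X h1 h2
      have := H x hx hx0
      rw [h3]
      positivity
  · constructor
    · intro H x hx hx0
      obtain ⟨X, h1, h2, h3⟩ := lemA x hx hx0
      have := H X h1 h2
      rw [h3] at this
      nlinarith
    · intro H X h1 h2
      obtain ⟨x, hx, hx0, h3⟩ := lemB X h1 h2
      have := H x hx hx0
      rw [h3]
      nlinarith
end

section
/- Assume κ < −1 and set λ := √(−1−κ). Let D⁺ := { v ∈ V : φ(v) = v }. Then the symmetric bilinear form (X,X′) ↦ g(h(X),X′) on D⁺ is positive definite if and only if the restriction of g to ker(φ∘h − λ·id) is negative definite, and it is negative definite if and only if the restriction of g to ker(φ∘h − λ·id) is positive definite. -/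
theorem stmt_11
    {V : Type*} [AddCommGroup V] [Module ℝ V]
    (ξ : V) (η : V →ₗ[ℝ] ℝ) (φ h : V →ₗ[ℝ] V) (κ : ℝ)
    (hηξ : η ξ = 1)
    (hφ2 : ∀ v, φ (φ v) = v - η v • ξ)
    (hφξ : φ ξ = 0)
    (hηφ : ∀ v, η (φ v) = 0)
    (hhξ : h ξ = 0)
    (hηh : ∀ v, η (h v) = 0)
    (hhφ : ∀ v, h (φ v) = - φ (h v))
    (hh2 : ∀ v, h (h v) = (1 + κ) • φ (φ v))
    (g : V →ₗ[ℝ] V →ₗ[ℝ] ℝ)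
    (hgsymm : ∀ X Y, g X Y = g Y X)
    (hgφ : ∀ X Y, g (φ X) (φ Y) = - g X Y + η X * η Y)
    (hgskew : ∀ X Y, g X (φ Y) = - g (φ X) Y)
    (hgh : ∀ X Y, g (h X) Y = g X (h Y))
    (hκ : κ < -1)
    (lam : ℝ) (hlam : lam = Real.sqrt (-1 - κ)) :
    ((∀ X, φ X = X → X ≠ 0 → 0 < g (h X) X) ↔
      (∀ x, φ (h x) = lam • x → x ≠ 0 → g x x < 0)) ∧
    ((∀ X, φ X = X → X ≠ 0 → g (h X) X < 0) ↔
      (∀ x, φ (h x) = lam • x → x ≠ 0 → 0 < g x x)) := by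
  have hlam2 : lam ^ 2 = -1 - κ := by
    rw [hlam, sq]; exact Real.mul_self_sqrt (by linarith)
  have hlampos : 0 < lam := by
    rw [hlam]; exact Real.sqrt_pos.2 (by linarith)
  have hlamne : lam ≠ 0 := ne_of_gt hlampos
  have h1κ : (1 + κ) = -(lam ^ 2) := by linarith
  have hc2 : lam * lam - (-(lam ^ 2)) ≠ 0 := by nlinarith
  -- η vanishes on D⁺
  have hDη : ∀ X : V, φ X = X → η X = 0 := by
    intro X hX
    have := hηφ X; rwa [hX] at this
  -- g is isotropic on D⁺
  have hDg : ∀ X : V, φ X = X → g X X = 0 := by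
    intro X hX
    have t := hgφ X X
    rw [hX, hDη X hX] at t
    linarith
  -- h² = -λ² on D⁺
  have hDh2 : ∀ X : V, φ X = X → h (h X) = (-(lam ^ 2)) • X := by
    intro X hX
    rw [hh2, hX, hX, h1κ]
  -- Forward correspondence: X ∈ D⁺ ↦ x = λX - hX
  have main : ∀ X : V, φ X = X → X ≠ 0 →
      φ (h (lam • X - h X)) = lam • (lam • X - h X) ∧
      (lam • X - h X) ≠ 0 ∧
      g (lam • X - h X) (lam • X - h X) = -(2 * lam) * g (h X) X := by
    intro X hX hX0
    have hφhX : φ (h X) = - h X := by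
      have t := hhφ X
      rw [hX] at t
      exact neg_eq_iff_eq_neg.mp t.symm
    have hhx : h (lam • X - h X) = lam • h X + (lam ^ 2) • X := by
      rw [map_sub, map_smul, hDh2 X hX]
      module
    refine ⟨?_, ?_, ?_⟩
    · rw [hhx, map_add, map_smul, map_smul, hφhX, hX]
      module
    · intro h0
      have e : lam • X = h X := sub_eq_zero.mp h0
      have t1 : h (h X) = (lam * lam) • X := by
        rw [← e, map_smul, ← e, smul_smul]
      have t2 := hDh2 X hX
      have t3 : (lam * lam - (-(lam ^ 2))) • X = 0 := by
        rw [sub_smul, ← t1, ← t2, sub_self]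
      exact hX0 ((smul_eq_zero.mp t3).resolve_left hc2)
    · have hgXX : g X X = 0 := hDg X hX
      have hgXhX : g X (h X) = g (h X) X := (hgh X X).symm
      have hghh : g (h X) (h X) = 0 := by
        have t := hgh (h X) X
        rw [hDh2 X hX, map_smul, LinearMap.smul_apply, smul_eq_mul, hgXX] at t
        linarith
      simp only [map_sub, map_smul, LinearMap.sub_apply, LinearMap.smul_apply,
        smul_eq_mul]
      linear_combination (lam * lam) * hgXX + hghh - lam * hgXhX
  -- Reverse correspondence: x eigenvector ↦ X = x + φ x
  have main2 : ∀ x : V, φ (h x) = lam • x → x ≠ 0 →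
      φ (x + φ x) = x + φ x ∧
      (x + φ x) ≠ 0 ∧
      g (h (x + φ x)) (x + φ x) = -(2 * lam) * g x x := by
    intro x hx1 hx0
    have hηx : η x = 0 := by
      have t := hηφ (h x)
      rw [hx1, map_smul, smul_eq_mul] at t
      exact (mul_eq_zero.mp t).resolve_left hlamne
    have hhx : h x = lam • φ x := by
      have t := hφ2 (h x)
      rw [hx1, map_smul, hηh, zero_smul, sub_zero] at t
      exact t.symm
    have hφX : φ (x + φ x) = x + φ x := by
      rw [map_add, hφ2, hηx, zero_smul, sub_zero]
      abel
    have hhX : h (x + φ x) = lam • φ x - lam • x := by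
      rw [map_add, hhφ, hx1, hhx]
      module
    refine ⟨hφX, ?_, ?_⟩
    · intro h0
      have hxneg : φ x = -x := neg_eq_of_add_eq_zero_right h0 ▸ rfl
      have hhx' : h x = (-lam) • x := by rw [hhx, hxneg]; module
      have t1 : h (h x) = (lam * lam) • x := by
        rw [hhx', map_smul, hhx']; module
      have t2 : h (h x) = (-(lam ^ 2)) • x := by
        rw [hh2, hφ2, hηx, zero_smul, sub_zero, h1κ]
      have t3 : (lam * lam - (-(lam ^ 2))) • x = 0 := by
        rw [sub_smul, ← t1, ← t2, sub_self]
      exact hx0 ((smul_eq_zero.mp t3).resolve_left hc2)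
    · have hgxφ : g x (φ x) = 0 := by
        have t := hgskew x x
        have s := hgsymm (φ x) x
        linarith
      have hgφx : g (φ x) x = 0 := by rw [hgsymm]; exact hgxφ
      have hgφφ : g (φ x) (φ x) = - g x x := by
        have := hgφ x x
        rw [hηx] at this
        linarith
      rw [hhX]
      simp only [map_sub, map_add, map_smul, LinearMap.sub_apply,
        LinearMap.add_apply, LinearMap.smul_apply, smul_eq_mul]
      linear_combination lam * hgφφ + lam * hgφx - lam * hgxφ
  constructor
  · constructor
    · intro H x hx1 hx0
      obtain ⟨e1, e2, e3⟩ := main2 x hx1 hx0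
      have := H _ e1 e2
      nlinarith
    · intro H X h1 h2
      obtain ⟨e1, e2, e3⟩ := main X h1 h2
      have := H _ e1 e2
      nlinarith
  · constructor
    · intro H x hx1 hx0
      obtain ⟨e1, e2, e3⟩ := main2 x hx1 hx0
      have := H _ e1 e2
      nlinarith
    · intro H X h1 h2
      obtain ⟨e1, e2, e3⟩ := main X h1 h2
      have := H _ e1 e2
      nlinarith
end

section
/- Assume κ > −1, set λ := √(1+κ), and assume the restriction of g to ker(h − λ·id) is positive definite. Define φ′ := −λ^{−1}·(φ∘h) and g′(X,Y) := λ^{−1}·g(X,h(Y)) + η(X)η(Y). Then: (i) φ′∘φ′ = −id_V + η⊗ξ and φ′(ξ) = 0; (ii) g′ is a symmetric, positive-definite bilinear form (an inner product) on V; (iii) g′(φ′X,φ′Y) = g′(X,Y) − η(X)η(Y) for all X,Y; (iv) g′(X,φ′Y) = g(X,φY) for all X,Y (so the 2-form dη(X,Y) = g(X,φY) is unchanged). (This is the pointwise content of the theorem that a positive definite paracontact (κ,μ)-manifold with κ > −1 carries a canonical compatible contact Riemannian structure φ′ = −(1+κ)^{−1/2}·φ̃h̃, g′ = −dη(·,φ′·)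 + η⊗η.) -/
set_option maxHeartbeats 1000000 in
theorem stmt_12
    {V : Type*} [AddCommGroup V] [Module ℝ V]
    (ξ : V) (η : V →ₗ[ℝ] ℝ) (φ h : V →ₗ[ℝ] V) (κ : ℝ)
    (hηξ : η ξ = 1)
    (hφ2 : ∀ v, φ (φ v) = v - η v • ξ)
    (hφξ : φ ξ = 0)
    (hηφ : ∀ v, η (φ v) = 0)
    (hhξ : h ξ = 0)
    (hηh : ∀ v, η (h v) = 0)
    (hhφ : ∀ v, h (φ v) = - φ (h v))
    (hh2 : ∀ v, h (h v) = (1 + κ) • φ (φ v))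
    (g : V →ₗ[ℝ] V →ₗ[ℝ] ℝ)
    (hgsymm : ∀ X Y, g X Y = g Y X)
    (hgφ : ∀ X Y, g (φ X) (φ Y) = - g X Y + η X * η Y)
    (hgskew : ∀ X Y, g X (φ Y) = - g (φ X) Y)
    (hgh : ∀ X Y, g (h X) Y = g X (h Y))
    (hκ : -1 < κ)
    (lam : ℝ) (hlam : lam = Real.sqrt (1 + κ))
    (hpos : ∀ x, h x = lam • x → x ≠ 0 → 0 < g x x)
    (φ' : V →ₗ[ℝ] V) (hφ' : φ' = -(lam⁻¹ • (φ ∘ₗ h)))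
    (g' : V → V → ℝ)
    (hg' : ∀ X Y, g' X Y = lam⁻¹ * g X (h Y) + η X * η Y) :
    (∀ v, φ' (φ' v) = - v + η v • ξ) ∧
    φ' ξ = 0 ∧
    (∀ X Y, g' X Y = g' Y X) ∧
    (∀ X, X ≠ 0 → 0 < g' X X) ∧
    (∀ X Y, g' (φ' X) (φ' Y) = g' X Y - η X * η Y) ∧
    (∀ X Y, g' X (φ' Y) = g X (φ Y)) := by
  have hκ' : (0:ℝ) < 1 + κ := by linarith
  have hlam0 : 0 < lam := by rw [hlam]; exact Real.sqrt_pos.mpr hκ'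
  have hlamne : lam ≠ 0 := ne_of_gt hlam0
  have hlamsq : lam * lam = 1 + κ := by
    rw [hlam]; exact Real.mul_self_sqrt hκ'.le
  have hφ3 : ∀ v, φ (φ (φ v)) = φ v := by
    intro v
    rw [hφ2 v]
    simp [map_sub, map_smul, hφξ]
  have hφ'app : ∀ v, φ' v = -(lam⁻¹ • φ (h v)) := by
    intro v; rw [hφ']; simp
  have key : ∀ v, h (φ' v) = lam • φ v := by
    intro v
    rw [hφ'app, map_neg, map_smul, hhφ, hh2, map_smul, hφ3]
    rw [smul_neg, smul_smul, neg_neg]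
    congr 1
    field_simp
    linarith [hlamsq]
  have hηφ' : ∀ v, η (φ' v) = 0 := by
    intro v; rw [hφ'app]; simp [hηφ]
  refine ⟨?_, ?_, ?_, ?_, ?_, ?_⟩
  · -- φ'∘φ' = -id + η⊗ξ
    intro v
    rw [hφ'app (φ' v)]
    rw [key, map_smul, smul_smul, hφ2]
    rw [inv_mul_cancel₀ hlamne, one_smul]
    abel
  · rw [hφ'app, hhξ, map_zero]; simp
  · -- symmetry
    intro X Y
    rw [hg', hg']
    rw [← hgh, hgsymm]
    ring
  · -- positivity
    intro X hX
    set w : V := X - η X • ξ with hwdef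
    have hηw : η w = 0 := by simp [hwdef, hηξ]
    have hhwX : h w = h X := by simp [hwdef, map_sub, map_smul, hhξ]
    have hh2w : h (h w) = (lam * lam) • w := by
      rw [hh2, hφ2, hηw, zero_smul, sub_zero, hlamsq]
    set wp : V := (2:ℝ)⁻¹ • (w + lam⁻¹ • h w) with hwpdef
    set wm : V := (2:ℝ)⁻¹ • (w - lam⁻¹ • h w) with hwmdef
    have hsum : wp + wm = w := by
      rw [hwpdef, hwmdef]; module
    have hhwp : h wp = lam • wp := by
      rw [hwpdef, map_smul, map_add, map_smul, hh2w]
      match_scalars <;> field_simp <;> ring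
    have hhwm : h wm = -(lam • wm) := by
      rw [hwmdef, map_smul, map_sub, map_smul, hh2w]
      match_scalars <;> field_simp <;> ring
    have hηwm : η wm = 0 := by
      rw [hwmdef]; simp [hηw, hηh]
    have hgwm : g (φ wm) (φ wm) = - g wm wm := by
      rw [hgφ, hηwm]; ring
    -- g X (h X) = lam * (g wp wp - g wm wm)
    have hXw : X = w + η X • ξ := by rw [hwdef]; abel
    have hgξh : g ξ (h w) = 0 := by
      rw [← hgh, hhξ]; simp
    have hgξhX : g ξ (h X) = 0 := by rw [← hgh, hhξ]; simp
    have hgXhX : g X (h X) = lam * (g wp wp - g wm wm) := by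
      have e1 : g w (h w) = g X (h X) := by
        rw [hhwX, hwdef]
        simp only [map_sub, LinearMap.sub_apply, map_smul, LinearMap.smul_apply, smul_eq_mul]
        rw [hgξhX]; ring
      have e2 : h w = lam • wp + (-(lam • wm)) := by
        rw [← hhwp, ← hhwm, ← map_add, hsum]
      rw [← e1, e2, ← hsum]
      simp only [map_add, map_neg, map_smul, LinearMap.add_apply, LinearMap.neg_apply,
        LinearMap.smul_apply, smul_eq_mul]
      rw [hgsymm wm wp]
      ring
    have hg'XX : g' X X = g wp wp + g (φ wm) (φ wm) + η X * η X := by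
      rw [hg', hgXhX, hgwm, ← mul_assoc, inv_mul_cancel₀ hlamne, one_mul]
      ring
    -- each term nonneg
    have hwp_nonneg : 0 ≤ g wp wp ∧ (wp ≠ 0 → 0 < g wp wp) := by
      by_cases hz : wp = 0
      · simp [hz]
      · have := hpos wp hhwp hz
        exact ⟨this.le, fun _ => this⟩
    have hwm_nonneg : 0 ≤ g (φ wm) (φ wm) ∧ (wm ≠ 0 → 0 < g (φ wm) (φ wm)) := by
      by_cases hz : wm = 0
      · simp [hz]
      · have hφwm_ne : φ wm ≠ 0 := by
          intro h0
          apply hz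
          have := hφ2 wm
          rw [h0, map_zero, hηwm, zero_smul, sub_zero] at this
          exact this.symm
        have hhφwm : h (φ wm) = lam • φ wm := by
          rw [hhφ, hhwm]; simp [map_smul]
        have := hpos (φ wm) hhφwm hφwm_ne
        exact ⟨this.le, fun _ => this⟩
    rw [hg'XX]
    by_cases hwp0 : wp = 0
    · by_cases hwm0 : wm = 0
      · have hw0 : w = 0 := by rw [← hsum, hwp0, hwm0, add_zero]
        have hηX : η X ≠ 0 := by
          intro h0
          apply hX
          rw [hXw, hw0, h0, zero_smul, add_zero]
        have : 0 < η X * η X := mul_self_pos.mpr hηX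
        nlinarith [hwp_nonneg.1, hwm_nonneg.1]
      · have := hwm_nonneg.2 hwm0
        nlinarith [hwp_nonneg.1, mul_self_nonneg (η X)]
    · have := hwp_nonneg.2 hwp0
      nlinarith [hwm_nonneg.1, mul_self_nonneg (η X)]
  · -- g'(φ'X, φ'Y) = g' X Y - ηX ηY
    intro X Y
    rw [hg', hg', key, hηφ', hηφ']
    rw [map_smul]
    simp only [smul_eq_mul]
    rw [hφ'app X, map_neg, map_smul]
    simp only [LinearMap.neg_apply, LinearMap.smul_apply, smul_eq_mul]
    rw [hgφ, hηh, ← hgh, hgh]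
    field_simp
    ring
  · -- g'(X, φ'Y) = g(X, φY)
    intro X Y
    rw [hg', key, hηφ', map_smul]
    simp only [smul_eq_mul]
    rw [← mul_assoc, inv_mul_cancel₀ hlamne, one_mul, mul_zero, add_zero]
end

section
/- Assume κ < −1, set λ := √(−1−κ), and assume the restriction of g to ker(φ∘h − λ·id) is negative definite. Define φ′ := λ^{−1}·h and g′(X,Y) := −λ^{−1}·g(X,(φ∘h)(Y)) + η(X)η(Y). Then: (i) φ′∘φ′ = −id_V + η⊗ξ and φ′(ξ) = 0; (ii) g′ is a symmetric, positive-definite bilinear form (an inner product) on V; (iii) g′(φ′X,φ′Y) = g′(X,Y) − η(X)η(Y) for all X,Y; (iv) g′(X,φ′Y) = g(X,φY) for all X,Y (so the 2-form dη(X,Y) = g(X,φY) is unchanged). (This is the pointwise content of the theorem that a positive definite paracontact (κ,μ)-manifold with κ < −1 carries a canonical compatible contact Riemannian structure φ′ = (−1−κ)^{−1/2}·h̃, g′ = −dη(·,φ′·) + η⊗η.) -/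
/-!
Put `A := φ ∘ h`. From `h² = (1 + κ) φ²` and `hφ = -φh` one gets `A² = λ² (id - η ⊗ ξ)`, so
`ker η` splits as `E₊ ⊕ E₋` into the `±λ`-eigenspaces of `A`, and `A` is `g`-self-adjoint.
By hypothesis `g` is negative definite on `E₊`; since `φ` anticommutes with `A` it maps `E₋`
into `E₊`, and `g(φX, φX) = -g(X, X)` on `ker η` makes `g` positive definite on `E₋`.
Hence `X ↦ -g(X, AX) = λ (g(X₋, X₋) - g(X₊, X₊))` is positive definite on `ker η`, which is the
positivity of `g'`; the remaining identities are direct computations with `λ⁻² (1 + κ) = -1`.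
-/

theorem exists_eq_add_eigenvectors_of_apply_apply_eq_mul_self_smul {K M : Type*} [Field K]
    [CharZero K] [AddCommGroup M] [Module K M] (A : M →ₗ[K] M) {c : K} (hc : c ≠ 0) {w : M}
    (hw : A (A w) = (c * c) • w) :
    ∃ p m, w = p + m ∧ A p = c • p ∧ A m = (-c) • m := by
  refine ⟨(2 : K)⁻¹ • (w + c⁻¹ • A w), (2 : K)⁻¹ • (w - c⁻¹ • A w), by module, ?_, ?_⟩ <;>
  · simp only [map_smul, map_add, map_sub, hw, smul_smul]
    match_scalars <;> field_simp

theorem apply_add_apply_add_eq_of_eigen {R M : Type*} [CommRing R] [AddCommGroup M] [Module R M]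
    (g : M →ₗ[R] M →ₗ[R] R) (hg : ∀ x y, g x y = g y x) (A : M →ₗ[R] M) {c : R} {p m : M}
    (hp : A p = c • p) (hm : A m = (-c) • m) :
    g (p + m) (A (p + m)) = c * (g p p - g m m) := by
  simp only [map_add, hp, hm, map_smul, LinearMap.add_apply, smul_eq_mul, hg m p]
  ring

section Paracontact

variable {V : Type*} [AddCommGroup V] [Module ℝ V] {ξ : V} {η : V →ₗ[ℝ] ℝ} {φ h : V →ₗ[ℝ] V}
  {κ : ℝ}

theorem phi_h_h (hφ2 : ∀ v, φ (φ v) = v - η v • ξ) (hηφ : ∀ v, η (φ v) = 0)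
    (hh2 : ∀ v, h (h v) = (1 + κ) • φ (φ v)) (v : V) :
    φ (h (h v)) = (1 + κ) • φ v := by
  rw [hh2, map_smul, hφ2, hηφ, zero_smul, sub_zero]

theorem phi_h_phi (hφ2 : ∀ v, φ (φ v) = v - η v • ξ) (hηh : ∀ v, η (h v) = 0)
    (hhφ : ∀ v, h (φ v) = - φ (h v)) (v : V) :
    φ (h (φ v)) = - h v := by
  rw [hhφ, map_neg, hφ2, hηh, zero_smul, sub_zero]

theorem phi_h_phi_h (hφ2 : ∀ v, φ (φ v) = v - η v • ξ)
    (hηh : ∀ v, η (h v) = 0) (hhφ : ∀ v, h (φ v) = - φ (h v))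
    (hh2 : ∀ v, h (h v) = (1 + κ) • φ (φ v)) (v : V) :
    φ (h (φ (h v))) = (-(1 + κ)) • (v - η v • ξ) := by
  rw [phi_h_phi hφ2 hηh hhφ, hh2, hφ2, neg_smul]

theorem phi_h_phi_eq_smul_of_phi_h_eq_neg_smul (hφ2 : ∀ v, φ (φ v) = v - η v • ξ)
    (hηh : ∀ v, η (h v) = 0) (hhφ : ∀ v, h (φ v) = - φ (h v)) {c : ℝ} {v : V}
    (hv : φ (h v) = (-c) • v) :
    φ (h (φ v)) = c • φ v := by
  have hφhv : h v = (-c) • φ v := by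
    rw [← map_smul, ← hv, hφ2, hηh, zero_smul, sub_zero]
  rw [phi_h_phi hφ2 hηh hhφ, hφhv, neg_smul, neg_neg]

variable (g : V →ₗ[ℝ] V →ₗ[ℝ] ℝ)

theorem apply_phi_h_comm (hgskew : ∀ X Y, g X (φ Y) = - g (φ X) Y)
    (hhφ : ∀ v, h (φ v) = - φ (h v)) (hgh : ∀ X Y, g (h X) Y = g X (h Y)) (X Y : V) :
    g X (φ (h Y)) = g (φ (h X)) Y := by
  rw [hgskew, ← hgh, hhφ, map_neg, LinearMap.neg_apply, neg_neg]

theorem apply_xi_phi_eq_zero (hφξ : φ ξ = 0) (hgskew : ∀ X Y, g X (φ Y) = - g (φ X) Y) (Y : V) :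
    g ξ (φ Y) = 0 := by
  rw [hgskew, hφξ, map_zero, LinearMap.zero_apply, neg_zero]

theorem apply_self_pos_of_phi_h_eq_neg_smul (hφ2 : ∀ v, φ (φ v) = v - η v • ξ)
    (hηh : ∀ v, η (h v) = 0) (hhφ : ∀ v, h (φ v) = - φ (h v))
    (hgφ : ∀ X Y, g (φ X) (φ Y) = - g X Y + η X * η Y) {lam : ℝ}
    (hneg : ∀ x, φ (h x) = lam • x → x ≠ 0 → g x x < 0)
    {m : V} (hηm : η m = 0) (hm : φ (h m) = (-lam) • m) (hm0 : m ≠ 0) :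
    0 < g m m := by
  have hφm : φ m ≠ 0 := by
    intro h0
    have hφφm := hφ2 m
    rw [h0, map_zero, hηm, zero_smul, sub_zero] at hφφm
    exact hm0 hφφm.symm
  have := hneg (φ m) (phi_h_phi_eq_smul_of_phi_h_eq_neg_smul hφ2 hηh hhφ hm) hφm
  rw [hgφ, hηm, mul_zero, add_zero] at this
  linarith

theorem apply_phi_h_self_neg_of_eta_eq_zero (hφ2 : ∀ v, φ (φ v) = v - η v • ξ)
    (hηφ : ∀ v, η (φ v) = 0) (hηh : ∀ v, η (h v) = 0) (hhφ : ∀ v, h (φ v) = - φ (h v))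
    (hh2 : ∀ v, h (h v) = (1 + κ) • φ (φ v)) (hgsymm : ∀ X Y, g X Y = g Y X)
    (hgφ : ∀ X Y, g (φ X) (φ Y) = - g X Y + η X * η Y) {lam : ℝ} (hlam : 0 < lam)
    (hlam2 : lam * lam = -(1 + κ)) (hneg : ∀ x, φ (h x) = lam • x → x ≠ 0 → g x x < 0)
    {w : V} (hηw : η w = 0) (hw0 : w ≠ 0) :
    g w (φ (h w)) < 0 := by
  have hAA : (φ ∘ₗ h) ((φ ∘ₗ h) w) = (lam * lam) • w := by
    simp only [LinearMap.comp_apply, phi_h_phi_h hφ2 hηh hhφ hh2, hηw, zero_smul, sub_zero,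
      hlam2]
  obtain ⟨p, m, rfl, hp, hm⟩ :=
    exists_eq_add_eigenvectors_of_apply_apply_eq_mul_self_smul (φ ∘ₗ h) hlam.ne' hAA
  have eta_eq_zero {c : ℝ} (hc : c ≠ 0) {v : V} (hv : φ (h v) = c • v) : η v = 0 := by
    simpa [hc, hηφ] using congrArg η hv
  have hηm : η m = 0 := eta_eq_zero (neg_ne_zero.mpr hlam.ne') hm
  have hpp : g p p ≤ 0 := by
    rcases eq_or_ne p 0 with rfl | hp0
    · simp
    · exact (hneg p hp hp0).le
  have hmm : 0 ≤ g m m := by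
    rcases eq_or_ne m 0 with rfl | hm0
    · simp
    · exact (apply_self_pos_of_phi_h_eq_neg_smul g hφ2 hηh hhφ hgφ hneg hηm hm hm0).le
  have hsplit : g (p + m) (φ (h (p + m))) = lam * (g p p - g m m) :=
    apply_add_apply_add_eq_of_eigen g hgsymm (φ ∘ₗ h) hp hm
  rw [hsplit]
  rcases eq_or_ne p 0 with rfl | hp0
  · have hm0 : m ≠ 0 := by simpa using hw0
    have := apply_self_pos_of_phi_h_eq_neg_smul g hφ2 hηh hhφ hgφ hneg hηm hm hm0
    nlinarith
  · have := hneg p hp hp0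
    nlinarith

theorem apply_phi_h_self_eq_sub_eta_smul (hφξ : φ ξ = 0) (hhξ : h ξ = 0)
    (hgskew : ∀ X Y, g X (φ Y) = - g (φ X) Y) (X : V) :
    g X (φ (h X)) = g (X - η X • ξ) (φ (h (X - η X • ξ))) := by
  simp only [map_sub, map_smul, hhξ, smul_zero, sub_zero, LinearMap.sub_apply,
    LinearMap.smul_apply, apply_xi_phi_eq_zero g hφξ hgskew]

theorem pos_neg_inv_mul_apply_phi_h_add_eta_mul_eta (hηξ : η ξ = 1)
    (hφ2 : ∀ v, φ (φ v) = v - η v • ξ) (hφξ : φ ξ = 0) (hηφ : ∀ v, η (φ v) = 0)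
    (hhξ : h ξ = 0) (hηh : ∀ v, η (h v) = 0) (hhφ : ∀ v, h (φ v) = - φ (h v))
    (hh2 : ∀ v, h (h v) = (1 + κ) • φ (φ v)) (hgsymm : ∀ X Y, g X Y = g Y X)
    (hgφ : ∀ X Y, g (φ X) (φ Y) = - g X Y + η X * η Y)
    (hgskew : ∀ X Y, g X (φ Y) = - g (φ X) Y) {lam : ℝ} (hlam : 0 < lam)
    (hlam2 : lam * lam = -(1 + κ))
    (hneg : ∀ x, φ (h x) = lam • x → x ≠ 0 → g x x < 0) {X : V} (hX : X ≠ 0) :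
    0 < -(lam⁻¹ * g X (φ (h X))) + η X * η X := by
  rw [apply_phi_h_self_eq_sub_eta_smul (η := η) g hφξ hhξ hgskew]
  rcases eq_or_ne (X - η X • ξ) 0 with hw0 | hw0
  · have hηX : η X ≠ 0 := by
      rintro hηX
      rw [hηX, zero_smul, sub_zero] at hw0
      exact hX hw0
    simp only [hw0, map_zero, mul_zero, neg_zero, zero_add]
    exact mul_self_pos.mpr hηX
  · have hηw : η (X - η X • ξ) = 0 := by simp [hηξ]
    have hneg_w := apply_phi_h_self_neg_of_eta_eq_zero g hφ2 hηφ hηh hhφ hh2 hgsymm hgφ hlam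
      hlam2 hneg hηw hw0
    have : 0 < -(lam⁻¹ * g (X - η X • ξ) (φ (h (X - η X • ξ)))) :=
      neg_pos.mpr (mul_neg_of_pos_of_neg (inv_pos.mpr hlam) hneg_w)
    nlinarith [mul_self_nonneg (η X)]

end Paracontact

theorem stmt_13
    {V : Type*} [AddCommGroup V] [Module ℝ V]
    (ξ : V) (η : V →ₗ[ℝ] ℝ) (φ h : V →ₗ[ℝ] V) (κ : ℝ)
    (hηξ : η ξ = 1)
    (hφ2 : ∀ v, φ (φ v) = v - η v • ξ)
    (hφξ : φ ξ = 0)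
    (hηφ : ∀ v, η (φ v) = 0)
    (hhξ : h ξ = 0)
    (hηh : ∀ v, η (h v) = 0)
    (hhφ : ∀ v, h (φ v) = - φ (h v))
    (hh2 : ∀ v, h (h v) = (1 + κ) • φ (φ v))
    (g : V →ₗ[ℝ] V →ₗ[ℝ] ℝ)
    (hgsymm : ∀ X Y, g X Y = g Y X)
    (hgφ : ∀ X Y, g (φ X) (φ Y) = - g X Y + η X * η Y)
    (hgskew : ∀ X Y, g X (φ Y) = - g (φ X) Y)
    (hgh : ∀ X Y, g (h X) Y = g X (h Y))
    (hκ : κ < -1)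
    (lam : ℝ) (hlam : lam = Real.sqrt (-1 - κ))
    (hneg : ∀ x, φ (h x) = lam • x → x ≠ 0 → g x x < 0)
    (φ' : V →ₗ[ℝ] V) (hφ' : φ' = lam⁻¹ • h)
    (g' : V → V → ℝ)
    (hg' : ∀ X Y, g' X Y = -(lam⁻¹ * g X (φ (h Y))) + η X * η Y) :
    (∀ v, φ' (φ' v) = - v + η v • ξ) ∧
    φ' ξ = 0 ∧
    (∀ X Y, g' X Y = g' Y X) ∧
    (∀ X, X ≠ 0 → 0 < g' X X) ∧
    (∀ X Y, g' (φ' X) (φ' Y) = g' X Y - η X * η Y) ∧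
    (∀ X Y, g' X (φ' Y) = g X (φ Y)) := by
  have hlam_pos : 0 < lam := hlam ▸ Real.sqrt_pos.mpr (by linarith)
  have hlam_sq : lam * lam = -(1 + κ) := by
    rw [hlam, Real.mul_self_sqrt (by linarith)]
    ring
  have hinv_sq : lam⁻¹ * lam⁻¹ * (1 + κ) = -1 := by
    field_simp
    linarith
  subst hφ'
  refine ⟨fun v => ?_, by simp [hhξ], fun X Y => ?_, fun X hX => ?_, fun X Y => ?_, fun X Y => ?_⟩
  · simp only [LinearMap.smul_apply, map_smul, hh2, hφ2, smul_smul, ← mul_assoc, hinv_sq]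
    module
  · rw [hg', hg', apply_phi_h_comm g hgskew hhφ hgh, hgsymm, mul_comm (η X)]
  · rw [hg']
    exact pos_neg_inv_mul_apply_phi_h_add_eta_mul_eta g hηξ hφ2 hφξ hηφ hhξ hηh hhφ hh2 hgsymm
      hgφ hgskew hlam_pos hlam_sq hneg hX
  · simp only [hg', LinearMap.smul_apply, map_smul, hηh, phi_h_h hφ2 hηφ hh2, smul_eq_mul, hgh,
      hhφ, map_neg]
    linear_combination (lam⁻¹ * g X (φ (h Y))) * hinv_sq
  · simp only [hg', LinearMap.smul_apply, map_smul, hηh, phi_h_h hφ2 hηφ hh2, smul_eq_mul]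
    linear_combination (-g X (φ Y)) * hinv_sq
end

section
/- Assume κ < −1, set λ := √(−1−κ), and fix μ ∈ ℝ. Define the linear map A := ((1 − μ/2)/λ)·(φ∘h) + λ·φ. Then A∘A = ((1 − μ/2)² − 1 − κ)·(id_V − η⊗ξ) and A(ξ) = 0; in particular, if (1 − μ/2)² − 1 − κ > 0 the only possible eigenvalues of A are 0 and ±√((1 − μ/2)² − 1 − κ). (This is the key computation for the operator h′ = (1/2)𝓛_ξφ′ = ±A of the contact metric structure induced on a paracontact (κ,μ)-manifold with κ < −1.) -/
theorem stmt_14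
    {V : Type*} [AddCommGroup V] [Module ℝ V]
    (ξ : V) (η : V →ₗ[ℝ] ℝ) (φ h : V →ₗ[ℝ] V) (κ : ℝ)
    (hηξ : η ξ = 1)
    (hφ2 : ∀ v, φ (φ v) = v - η v • ξ)
    (hφξ : φ ξ = 0)
    (hηφ : ∀ v, η (φ v) = 0)
    (hhξ : h ξ = 0)
    (hηh : ∀ v, η (h v) = 0)
    (hhφ : ∀ v, h (φ v) = - φ (h v))
    (hh2 : ∀ v, h (h v) = (1 + κ) • φ (φ v))
    (hκ : κ < -1) (μ : ℝ)
    (lam : ℝ) (hlam : lam = Real.sqrt (-1 - κ))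
    (A : V →ₗ[ℝ] V)
    (hA : A = ((1 - μ / 2) / lam) • (φ ∘ₗ h) + lam • φ) :
    (∀ v, A (A v) = ((1 - μ / 2) ^ 2 - 1 - κ) • (v - η v • ξ)) ∧
    A ξ = 0 ∧
    (0 < (1 - μ / 2) ^ 2 - 1 - κ →
      ∀ (c : ℝ) (x : V), x ≠ 0 → A x = c • x →
        c = 0 ∨ c = Real.sqrt ((1 - μ / 2) ^ 2 - 1 - κ) ∨
          c = -Real.sqrt ((1 - μ / 2) ^ 2 - 1 - κ)) := by
  have hlam2 : lam * lam = -1 - κ := by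
    rw [hlam]; exact Real.mul_self_sqrt (by linarith)
  have hlamne : lam ≠ 0 := by
    intro h0; rw [h0] at hlam2; nlinarith
  have e4 : ∀ w, φ (φ (φ (φ w))) = w - η w • ξ := by
    intro w; rw [hφ2 (φ (φ w)), hηφ, zero_smul, sub_zero, hφ2]
  have e1 : ∀ w, φ (h (φ (h w))) = (lam * lam) • (w - η w • ξ) := by
    intro w
    rw [hhφ (h w), map_neg, hh2, map_smul, map_smul, e4, ← neg_smul]
    congr 1; linarith
  have e2 : ∀ w, φ (h (φ w)) = - h w := by
    intro w; rw [hhφ w, map_neg, hφ2 (h w), hηh, zero_smul, sub_zero]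
  have e3 : ∀ w, φ (φ (h w)) = h w := by
    intro w; rw [hφ2 (h w), hηh, zero_smul, sub_zero]
  set a : ℝ := (1 - μ / 2) / lam with ha
  have hs : ((1 - μ / 2) ^ 2 - 1 - κ : ℝ) = a * (a * (lam * lam)) + lam * lam := by
    rw [ha]; field_simp; nlinarith
  have key : ∀ v, A (A v) = ((1 - μ / 2) ^ 2 - 1 - κ) • (v - η v • ξ) := by
    intro v
    rw [hA]
    simp only [LinearMap.add_apply, LinearMap.smul_apply, LinearMap.comp_apply,
      map_add, map_smul]
    rw [e1 v, e2 v, e3 v, hφ2 v, hs]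
    module
  have hAξ : A ξ = 0 := by
    rw [hA]
    simp [hhξ, hφξ]
  refine ⟨key, hAξ, ?_⟩
  intro hpos c x hx hAx
  by_cases hc : c = 0
  · exact Or.inl hc
  · right
    have hηA : ∀ v, η (A v) = 0 := by
      intro v; rw [hA]; simp [hηφ]
    have hηx : η x = 0 := by
      have h1 : η (A x) = 0 := hηA x
      rw [hAx, map_smul, smul_eq_mul] at h1
      rcases mul_eq_zero.mp h1 with h' | h'
      · exact absurd h' hc
      · exact h'
    have h2 : (c * c) • x = ((1 - μ / 2) ^ 2 - 1 - κ) • x := by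
      have := key x
      rw [hAx, map_smul, hAx, hηx, zero_smul, sub_zero, smul_smul] at this
      exact this
    have h3 : c * c = (1 - μ / 2) ^ 2 - 1 - κ := by
      have h4 : (c * c - ((1 - μ / 2) ^ 2 - 1 - κ)) • x = 0 := by
        rw [sub_smul, h2, sub_self]
      rcases smul_eq_zero.mp h4 with h' | h'
      · linarith [h']
      · exact absurd h' hx
    have hsq := Real.sq_sqrt hpos.le
    have h5 : (c - Real.sqrt ((1 - μ / 2) ^ 2 - 1 - κ)) *
        (c + Real.sqrt ((1 - μ / 2) ^ 2 - 1 - κ)) = 0 := by nlinarith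
    rcases mul_eq_zero.mp h5 with h' | h'
    · exact Or.inl (by linarith)
    · exact Or.inr (by linarith)
end

section
/- Assume g is nondegenerate and dim V = 2n+1. If κ > −1, set λ := √(1+κ) and T := h; if κ < −1, set λ := √(−1−κ) and T := φ∘h. Then there exist vectors X₁, …, Xₙ ∈ ker(T − λ·id) such that (X₁, …, Xₙ, φ(X₁), …, φ(Xₙ), ξ) is a basis of V which is pairwise g-orthogonal, with g(Xᵢ,Xᵢ) = ±1, g(φ(Xᵢ),φ(Xᵢ)) = −g(Xᵢ,Xᵢ), g(ξ,ξ) = 1, T(Xᵢ) = λ·Xᵢ and T(φ(Xᵢ)) = −λ·φ(Xᵢ) for every i. (Existence of an orthogonal φ-basis of eigenvectors of h, respectively of φ∘h.) -/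
/-!
Both `T = h` (for `κ > -1`) and `T = φ ∘ h` (for `κ < -1`) are `g`-self-adjoint, anticommute
with `φ`, kill `η`, and satisfy `T² = λ²` on `ker η`. Hence `ker η` is the direct sum of the
`±λ`-eigenspaces of `T`; they are `g`-orthogonal, and `φ` swaps them, so each has dimension `n`.
Since the `λ`-eigenspace is `g`-orthogonal to `ξ` and to the `-λ`-eigenspace, `g` stays
nondegenerate on it, so it has a `g`-orthogonal basis `Xᵢ` with `g(Xᵢ, Xᵢ) = ±1`. Together with
the `φ Xᵢ` and `ξ` this gives an orthogonal family of `2n + 1` non-isotropic vectors, hence a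
basis.
-/

open Module Module.End LinearMap

lemma inv_sqrt_abs_mul_inv_sqrt_abs_mul_self {d : ℝ} (hd : d ≠ 0) :
    (√|d|)⁻¹ * (√|d|)⁻¹ * d = 1 ∨ (√|d|)⁻¹ * (√|d|)⁻¹ * d = -1 := by
  rw [← mul_inv, Real.mul_self_sqrt (abs_nonneg d), inv_mul_eq_div]
  rcases hd.lt_or_gt with hneg | hpos
  · right; rw [abs_of_neg hneg, div_neg, div_self hd]
  · left; rw [abs_of_pos hpos, div_self hd]

lemma LinearMap.BilinForm.exists_basis_iIsOrtho_apply_self_eq_one_or_neg_one {W : Type*}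
    [AddCommGroup W] [Module ℝ W] [FiniteDimensional ℝ W] {B : LinearMap.BilinForm ℝ W}
    (hB : LinearMap.IsSymm B) (hsep : B.SeparatingLeft) :
    ∃ v : Basis (Fin (finrank ℝ W)) ℝ W,
      B.IsOrthoᵢ v ∧ ∀ i, B (v i) (v i) = 1 ∨ B (v i) (v i) = -1 := by
  obtain ⟨b, hb⟩ := BilinForm.exists_orthogonal_basis hB
  have hdiag := hb.not_isOrtho_basis_self_of_separatingLeft hsep
  let w i : ℝˣ := Units.mk0 (√|B (b i) (b i)|)⁻¹ (by simpa using hdiag i)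
  refine ⟨b.unitsSMul w, isOrthoᵢ_def.2 fun i j hij => ?_, fun i => ?_⟩
  · simp only [Basis.unitsSMul_apply, Units.smul_def, map_smul, LinearMap.smul_apply,
      isOrthoᵢ_def.1 hb i j hij, smul_zero]
  · simp only [Basis.unitsSMul_apply, Units.smul_def, map_smul, LinearMap.smul_apply, smul_eq_mul,
      w, Units.val_mk0, ← mul_assoc]
    exact inv_sqrt_abs_mul_inv_sqrt_abs_mul_self (hdiag i)

section Eigenspaces

variable {V : Type*} [AddCommGroup V] [Module ℝ V] {ξ : V} {η : V →ₗ[ℝ] ℝ} {φ T : End ℝ V}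
  {μ : ℝ} {x y : V}

lemma eta_eq_zero_of_mem_eigenspace (hηT : ∀ v, η (T v) = 0) (hμ : μ ≠ 0)
    (hx : x ∈ eigenspace T μ) : η x = 0 := by
  have := hηT x
  rw [mem_eigenspace_iff.1 hx, map_smul, smul_eq_mul] at this
  exact (mul_eq_zero.1 this).resolve_left hμ

lemma apply_mem_eigenspace_neg (hTφ : ∀ v, T (φ v) = -φ (T v)) (hx : x ∈ eigenspace T μ) :
    φ x ∈ eigenspace T (-μ) := by
  rw [mem_eigenspace_iff, hTφ, mem_eigenspace_iff.1 hx, map_smul, neg_smul]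

lemma finrank_eigenspace_neg_le [FiniteDimensional ℝ V] (hφ2 : ∀ v, φ (φ v) = v - η v • ξ)
    (hηT : ∀ v, η (T v) = 0) (hTφ : ∀ v, T (φ v) = -φ (T v)) (hμ : μ ≠ 0) :
    finrank ℝ (eigenspace T (-μ)) ≤ finrank ℝ (eigenspace T μ) := by
  have hle : eigenspace T (-μ) ≤ (eigenspace T μ).map φ := fun y hy => by
    have hφy : φ (φ y) = y := by
      rw [hφ2, eta_eq_zero_of_mem_eigenspace hηT (neg_ne_zero.2 hμ) hy, zero_smul, sub_zero]
    rw [← hφy]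
    exact Submodule.mem_map_of_mem (by simpa using apply_mem_eigenspace_neg hTφ hy)
  exact (Submodule.finrank_mono hle).trans (Submodule.finrank_map_le φ _)

lemma eigenspace_sup_eigenspace_neg (hηT : ∀ v, η (T v) = 0)
    (hT2 : ∀ v, η v = 0 → T (T v) = (μ * μ) • v) (hμ : μ ≠ 0) :
    eigenspace T μ ⊔ eigenspace T (-μ) = ker η := by
  refine le_antisymm (sup_le (fun v hv => eta_eq_zero_of_mem_eigenspace hηT hμ hv)
    (fun v hv => eta_eq_zero_of_mem_eigenspace hηT (neg_ne_zero.2 hμ) hv)) fun v hv => ?_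
  have hT2v := hT2 v hv
  have hplus : (2 * μ)⁻¹ • (T v + μ • v) ∈ eigenspace T μ := by
    rw [mem_eigenspace_iff, map_smul, map_add, hT2v, map_smul]
    match_scalars <;> field_simp
  have hminus : (2 * μ)⁻¹ • (μ • v - T v) ∈ eigenspace T (-μ) := by
    rw [mem_eigenspace_iff, map_smul, map_sub, hT2v, map_smul]
    match_scalars <;> field_simp
  convert Submodule.add_mem_sup hplus hminus using 1
  match_scalars <;> field_simp <;> ring

lemma finrank_eigenspace_eq [FiniteDimensional ℝ V] {n : ℕ} (hdim : finrank ℝ V = 2 * n + 1)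
    (hηξ : η ξ = 1) (hφ2 : ∀ v, φ (φ v) = v - η v • ξ) (hηT : ∀ v, η (T v) = 0)
    (hTφ : ∀ v, T (φ v) = -φ (T v)) (hT2 : ∀ v, η v = 0 → T (T v) = (μ * μ) • v)
    (hμ : μ ≠ 0) :
    finrank ℝ (eigenspace T μ) = n := by
  have hker : finrank ℝ (ker η) + 1 = 2 * n + 1 :=
    hdim ▸ Dual.finrank_ker_add_one_of_ne_zero (f := η) fun h => by simp [h] at hηξ
  have hdisj : eigenspace T μ ⊓ eigenspace T (-μ) = ⊥ :=
    ((eigenspaces_iSupIndep T).pairwiseDisjoint (by simpa [eq_neg_iff_add_eq_zero, ← two_mul]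
      using hμ)).eq_bot
  have hsum := Submodule.finrank_sup_add_finrank_inf_eq (eigenspace T μ) (eigenspace T (-μ))
  rw [eigenspace_sup_eigenspace_neg hηT hT2 hμ, hdisj, finrank_bot] at hsum
  have h₁ := finrank_eigenspace_neg_le hφ2 hηT hTφ hμ
  have h₂ := finrank_eigenspace_neg_le hφ2 hηT hTφ (neg_ne_zero.2 hμ)
  rw [neg_neg] at h₂
  omega

variable {g : V →ₗ[ℝ] V →ₗ[ℝ] ℝ}

lemma apply_eq_zero_of_mem_eigenspace_neg (hgT : ∀ X Y, g (T X) Y = g X (T Y)) (hμ : μ ≠ 0)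
    (hx : x ∈ eigenspace T μ) (hy : y ∈ eigenspace T (-μ)) : g x y = 0 := by
  have := hgT x y
  rw [mem_eigenspace_iff.1 hx, mem_eigenspace_iff.1 hy] at this
  simp only [map_smul, LinearMap.smul_apply, smul_eq_mul, neg_mul] at this
  have : (2 * μ) * g x y = 0 := by linarith
  exact (mul_eq_zero.1 this).resolve_left (mul_ne_zero two_ne_zero hμ)

lemma separatingLeft_restrict_eigenspace (hsep : g.SeparatingLeft) (hgξ : ∀ v, g v ξ = η v)
    (hηξ : η ξ = 1) (hηT : ∀ v, η (T v) = 0) (hgT : ∀ X Y, g (T X) Y = g X (T Y))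
    (hT2 : ∀ v, η v = 0 → T (T v) = (μ * μ) • v) (hμ : μ ≠ 0) :
    (BilinForm.restrict g (eigenspace T μ)).SeparatingLeft := by
  rintro ⟨x, hx⟩ hxE
  suffices x = 0 by simpa using this
  refine hsep x fun w => ?_
  have hw : w - η w • ξ ∈ eigenspace T μ ⊔ eigenspace T (-μ) := by
    simp [eigenspace_sup_eigenspace_neg hηT hT2 hμ, hηξ]
  obtain ⟨e, he, f, hf, hef⟩ := Submodule.mem_sup.1 hw
  rw [show w = η w • ξ + e + f by rw [add_assoc, hef]; abel, map_add, map_add, map_smul,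
    hgξ, eta_eq_zero_of_mem_eigenspace hηT hμ hx,
    apply_eq_zero_of_mem_eigenspace_neg hgT hμ hx hf]
  simpa using hxE ⟨e, he⟩

lemma exists_signed_orthonormal_eigenvectors [FiniteDimensional ℝ V] {n : ℕ}
    (hdim : finrank ℝ V = 2 * n + 1) (hηξ : η ξ = 1) (hφ2 : ∀ v, φ (φ v) = v - η v • ξ)
    (hgsymm : ∀ X Y, g X Y = g Y X) (hgξ : ∀ v, g v ξ = η v) (hsep : g.SeparatingLeft)
    (hgT : ∀ X Y, g (T X) Y = g X (T Y)) (hηT : ∀ v, η (T v) = 0)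
    (hTφ : ∀ v, T (φ v) = -φ (T v)) (hT2 : ∀ v, η v = 0 → T (T v) = (μ * μ) • v)
    (hμ : μ ≠ 0) :
    ∃ X : Fin n → V, (∀ i, X i ∈ eigenspace T μ) ∧ (∀ i j, i ≠ j → g (X i) (X j) = 0) ∧
      ∀ i, g (X i) (X i) = 1 ∨ g (X i) (X i) = -1 := by
  have hrank := finrank_eigenspace_eq hdim hηξ hφ2 hηT hTφ hT2 hμ
  obtain ⟨b, hbo, hb⟩ := LinearMap.BilinForm.exists_basis_iIsOrtho_apply_self_eq_one_or_neg_one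
    (B := BilinForm.restrict g (eigenspace T μ)) (isSymm_def.2 fun x y => hgsymm x y)
    (separatingLeft_restrict_eigenspace hsep hgξ hηξ hηT hgT hT2 hμ)
  refine ⟨fun i => b (finCongr hrank.symm i), fun i => (b _).2, fun i j hij => ?_, fun i => hb _⟩
  exact isOrthoᵢ_def.1 hbo _ _ ((finCongr hrank.symm).injective.ne hij)

theorem exists_orthogonal_phi_basis_of_eigenvectors [FiniteDimensional ℝ V] {n : ℕ}
    (hdim : finrank ℝ V = 2 * n + 1) (hηξ : η ξ = 1) (hφ2 : ∀ v, φ (φ v) = v - η v • ξ)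
    (hηφ : ∀ v, η (φ v) = 0) (hgsymm : ∀ X Y, g X Y = g Y X)
    (hgφ : ∀ X Y, g (φ X) (φ Y) = - g X Y + η X * η Y) (hgξ : ∀ v, g v ξ = η v)
    (hsep : g.SeparatingLeft) (hgT : ∀ X Y, g (T X) Y = g X (T Y)) (hηT : ∀ v, η (T v) = 0)
    (hTφ : ∀ v, T (φ v) = -φ (T v)) (hT2 : ∀ v, η v = 0 → T (T v) = (μ * μ) • v)
    (hμ : μ ≠ 0) :
    ∃ X : Fin n → V, ∃ f : (Fin n ⊕ Fin n ⊕ Unit) → V,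
      f = Sum.elim X (Sum.elim (fun i => φ (X i)) (fun _ => ξ)) ∧
      (∀ i, T (X i) = μ • X i) ∧
      (∀ i, T (φ (X i)) = (-μ) • φ (X i)) ∧
      LinearIndependent ℝ f ∧
      Submodule.span ℝ (Set.range f) = ⊤ ∧
      (∀ j j', j ≠ j' → g (f j) (f j') = 0) ∧
      (∀ i, g (X i) (X i) = 1 ∨ g (X i) (X i) = -1) ∧
      (∀ i, g (φ (X i)) (φ (X i)) = - g (X i) (X i)) ∧
      g ξ ξ = 1 := by
  obtain ⟨X, hXE, hXX, hX1⟩ :=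
    exists_signed_orthonormal_eigenvectors hdim hηξ hφ2 hgsymm hgξ hsep hgT hηT hTφ hT2 hμ
  have hφXE i : φ (X i) ∈ eigenspace T (-μ) := apply_mem_eigenspace_neg hTφ (hXE i)
  have hηX i : η (X i) = 0 := eta_eq_zero_of_mem_eigenspace hηT hμ (hXE i)
  have hgφX i j : g (φ (X i)) (φ (X j)) = - g (X i) (X j) := by rw [hgφ, hηX, hηX]; ring
  have hXφX i j : g (X i) (φ (X j)) = 0 :=
    apply_eq_zero_of_mem_eigenspace_neg hgT hμ (hXE i) (hφXE j)
  have hξξ : g ξ ξ = 1 := by rw [hgξ, hηξ]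
  set f : Fin n ⊕ Fin n ⊕ Unit → V := Sum.elim X (Sum.elim (fun i => φ (X i)) (fun _ => ξ))
  have hforth : ∀ j j', j ≠ j' → g (f j) (f j') = 0 := by
    rintro (i | i | ⟨⟩) (i' | i' | ⟨⟩) hne <;>
      simp only [f, Sum.elim_inl, Sum.elim_inr, hgξ, hηX, hηφ] at hne ⊢
    · exact hXX i i' (by simpa using hne)
    · exact hXφX i i'
    · rw [hgsymm, hXφX]
    · rw [hgφX, hXX i i' (by simpa using hne), neg_zero]
    · rw [hgsymm, hgξ, hηX]
    · rw [hgsymm, hgξ, hηφ]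
    · exact absurd rfl hne
  have hXne i : g (X i) (X i) ≠ 0 := by rcases hX1 i with h | h <;> simp [h]
  have hfdiag : ∀ j, g (f j) (f j) ≠ 0 := by
    rintro (i | i | -) <;> simp [f, hgφX, hXne, hξξ]
  have hli : LinearIndependent ℝ f :=
    BilinForm.linearIndependent_of_iIsOrtho (BilinForm.iIsOrtho_def.2 hforth) hfdiag
  have hcard : Fintype.card (Fin n ⊕ Fin n ⊕ Unit) = finrank ℝ V := by simp [hdim]; omega
  exact ⟨X, f, rfl, fun i => mem_eigenspace_iff.1 (hXE i),
    fun i => mem_eigenspace_iff.1 (hφXE i), hli, hli.span_eq_top_of_card_eq_finrank' hcard,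
    hforth, hX1, fun i => hgφX i i, hξξ⟩

end Eigenspaces

section Paracontact

variable {V : Type*} [AddCommGroup V] [Module ℝ V] {ξ : V} {η : V →ₗ[ℝ] ℝ} {φ h : End ℝ V}
  {g : V →ₗ[ℝ] V →ₗ[ℝ] ℝ} {κ : ℝ}

lemma apply_xi_eq_eta (hηξ : η ξ = 1) (hφξ : φ ξ = 0)
    (hgφ : ∀ X Y, g (φ X) (φ Y) = - g X Y + η X * η Y) (v : V) : g v ξ = η v := by
  have := hgφ v ξ
  rw [hφξ, hηξ, map_zero] at this
  linarith

lemma apply_apply_eq_smul_of_eta_eq_zero (hφ2 : ∀ v, φ (φ v) = v - η v • ξ)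
    (hh2 : ∀ v, h (h v) = (1 + κ) • φ (φ v)) {v : V} (hv : η v = 0) :
    h (h v) = (1 + κ) • v := by
  rw [hh2, hφ2, hv, zero_smul, sub_zero]

lemma comp_apply_phi_eq_neg (hhφ : ∀ v, h (φ v) = - φ (h v)) (v : V) :
    (φ ∘ₗ h) (φ v) = - φ ((φ ∘ₗ h) v) := by
  simp only [comp_apply, hhφ, map_neg]

lemma apply_comp_eq_apply_apply_comp (hgskew : ∀ X Y, g X (φ Y) = - g (φ X) Y)
    (hgh : ∀ X Y, g (h X) Y = g X (h Y)) (hhφ : ∀ v, h (φ v) = - φ (h v)) (X Y : V) :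
    g ((φ ∘ₗ h) X) Y = g X ((φ ∘ₗ h) Y) := by
  have := hgh (φ X) Y
  rw [hhφ, map_neg, LinearMap.neg_apply] at this
  rw [comp_apply, comp_apply, hgskew]
  linarith

lemma comp_apply_comp_apply_eq_smul_of_eta_eq_zero (hφ2 : ∀ v, φ (φ v) = v - η v • ξ)
    (hhφ : ∀ v, h (φ v) = - φ (h v))
    (hh2 : ∀ v, h (h v) = (1 + κ) • φ (φ v)) {v : V} (hv : η v = 0) :
    (φ ∘ₗ h) ((φ ∘ₗ h) v) = (-1 - κ) • v := by
  have hφφ : φ (φ v) = v := by rw [hφ2, hv, zero_smul, sub_zero]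
  rw [comp_apply, comp_apply, hhφ, map_neg, hh2, map_smul, map_smul, hφφ, hφφ, ← neg_smul]
  ring_nf

end Paracontact

theorem stmt_17_general
    {V : Type*} [AddCommGroup V] [Module ℝ V]
    (ξ : V) (η : V →ₗ[ℝ] ℝ) (φ h : V →ₗ[ℝ] V) (κ : ℝ)
    (hηξ : η ξ = 1)
    (hφ2 : ∀ v, φ (φ v) = v - η v • ξ)
    (hφξ : φ ξ = 0)
    (hηφ : ∀ v, η (φ v) = 0)
    (hηh : ∀ v, η (h v) = 0)
    (hhφ : ∀ v, h (φ v) = - φ (h v))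
    (hh2 : ∀ v, h (h v) = (1 + κ) • φ (φ v))
    (g : V →ₗ[ℝ] V →ₗ[ℝ] ℝ)
    (hgsymm : ∀ X Y, g X Y = g Y X)
    (hgφ : ∀ X Y, g (φ X) (φ Y) = - g X Y + η X * η Y)
    (hgskew : ∀ X Y, g X (φ Y) = - g (φ X) Y)
    (hgh : ∀ X Y, g (h X) Y = g X (h Y))
    [FiniteDimensional ℝ V] (n : ℕ)
    (hdim : Module.finrank ℝ V = 2 * n + 1)
    (hκ : κ ≠ -1)
    (hgnd : ∀ v : V, (∀ w, g v w = 0) → v = 0)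
    (T : V →ₗ[ℝ] V) (lam : ℝ)
    (hT : T = if -1 < κ then h else φ ∘ₗ h)
    (hlam : lam = if -1 < κ then Real.sqrt (1 + κ) else Real.sqrt (-1 - κ)) :
    ∃ X : Fin n → V, ∃ f : (Fin n ⊕ Fin n ⊕ Unit) → V,
      f = Sum.elim X (Sum.elim (fun i => φ (X i)) (fun _ => ξ)) ∧
      (∀ i, T (X i) = lam • X i) ∧
      (∀ i, T (φ (X i)) = (-lam) • φ (X i)) ∧
      LinearIndependent ℝ f ∧
      Submodule.span ℝ (Set.range f) = ⊤ ∧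
      (∀ j j', j ≠ j' → g (f j) (f j') = 0) ∧
      (∀ i, g (X i) (X i) = 1 ∨ g (X i) (X i) = -1) ∧
      (∀ i, g (φ (X i)) (φ (X i)) = - g (X i) (X i)) ∧
      g ξ ξ = 1 := by
  have hgξ := apply_xi_eq_eta hηξ hφξ hgφ
  by_cases hc : -1 < κ
  · rw [if_pos hc] at hT hlam
    subst hT hlam
    have hpos : 0 < 1 + κ := by linarith
    refine exists_orthogonal_phi_basis_of_eigenvectors hdim hηξ hφ2 hηφ hgsymm hgφ hgξ hgnd hgh
      hηh hhφ (fun v hv => ?_) (Real.sqrt_pos.2 hpos).ne'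
    rw [Real.mul_self_sqrt hpos.le, apply_apply_eq_smul_of_eta_eq_zero hφ2 hh2 hv]
  · rw [if_neg hc] at hT hlam
    subst hT hlam
    have hpos : 0 < -1 - κ := by
      have := lt_of_le_of_ne (not_lt.1 hc) hκ
      linarith
    refine exists_orthogonal_phi_basis_of_eigenvectors hdim hηξ hφ2 hηφ hgsymm hgφ hgξ hgnd
      (apply_comp_eq_apply_apply_comp hgskew hgh hhφ) (fun v => hηφ (h v))
      (comp_apply_phi_eq_neg hhφ) (fun v hv => ?_) (Real.sqrt_pos.2 hpos).ne'
    rw [Real.mul_self_sqrt hpos.le, comp_apply_comp_apply_eq_smul_of_eta_eq_zero hφ2 hhφ hh2 hv]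

theorem stmt_17
    {V : Type*} [AddCommGroup V] [Module ℝ V]
    (ξ : V) (η : V →ₗ[ℝ] ℝ) (φ h : V →ₗ[ℝ] V) (κ : ℝ)
    (hηξ : η ξ = 1)
    (hφ2 : ∀ v, φ (φ v) = v - η v • ξ)
    (hφξ : φ ξ = 0)
    (hηφ : ∀ v, η (φ v) = 0)
    (hhξ : h ξ = 0)
    (hηh : ∀ v, η (h v) = 0)
    (hhφ : ∀ v, h (φ v) = - φ (h v))
    (hh2 : ∀ v, h (h v) = (1 + κ) • φ (φ v))
    (g : V →ₗ[ℝ] V →ₗ[ℝ] ℝ)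
    (hgsymm : ∀ X Y, g X Y = g Y X)
    (hgφ : ∀ X Y, g (φ X) (φ Y) = - g X Y + η X * η Y)
    (hgskew : ∀ X Y, g X (φ Y) = - g (φ X) Y)
    (hgh : ∀ X Y, g (h X) Y = g X (h Y))
    [FiniteDimensional ℝ V] (n : ℕ)
    (hdim : Module.finrank ℝ V = 2 * n + 1)
    (hκ : κ ≠ -1)
    (hgnd : ∀ v : V, (∀ w, g v w = 0) → v = 0)
    (T : V →ₗ[ℝ] V) (lam : ℝ)
    (hT : T = if -1 < κ then h else φ ∘ₗ h)
    (hlam : lam = if -1 < κ then Real.sqrt (1 + κ) else Real.sqrt (-1 - κ)) :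
    ∃ X : Fin n → V, ∃ f : (Fin n ⊕ Fin n ⊕ Unit) → V,
      f = Sum.elim X (Sum.elim (fun i => φ (X i)) (fun _ => ξ)) ∧
      (∀ i, T (X i) = lam • X i) ∧
      (∀ i, T (φ (X i)) = (-lam) • φ (X i)) ∧
      LinearIndependent ℝ f ∧
      Submodule.span ℝ (Set.range f) = ⊤ ∧
      (∀ j j', j ≠ j' → g (f j) (f j') = 0) ∧
      (∀ i, g (X i) (X i) = 1 ∨ g (X i) (X i) = -1) ∧
      (∀ i, g (φ (X i)) (φ (X i)) = - g (X i) (X i)) ∧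
      g ξ ξ = 1 :=
  stmt_17_general ξ η φ h κ hηξ hφ2 hφξ hηφ hηh hhφ hh2 g hgsymm hgφ hgskew hgh n hdim hκ hgnd T lam
    hT hlam
end

section
/- Assume g is nondegenerate and dim V = 2n+1. Then the eigenspaces D⁺ := { v ∈ V : φ(v) = v } and D⁻ := { v ∈ V : φ(v) = −v } both have dimension n, and g has signature (n, n+1): there is a g-orthogonal basis of V consisting of n vectors v with g(v,v) = −1 and n+1 vectors v with g(v,v) = +1. (Any pseudo-Riemannian metric compatible with an almost paracontact structure on a (2n+1)-dimensional space necessarily has signature (n,n+1).) -/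
/-!
Write `D⁺`, `D⁻` for the `±1`-eigenspaces of `φ`. Since `g ξ = η` and `η ∘ φ = 0`, both lie in
`ker η`, and the compatibility `g(φX, φY) = -g(X, Y)` on `ker η` makes each of them totally
isotropic. The decomposition `u = η(u) ξ + ½(u' + φu) + ½(u' - φu)` with `u' = u - η(u) ξ` gives
`V = ℝξ ⊕ D⁺ ⊕ D⁻`, so nondegeneracy of `g` makes it a perfect pairing between `D⁺` and `D⁻`;
hence `dim D⁺ = dim D⁻ = n`. Taking a basis `eᵢ` of `D⁺` and the `g`-dual basis `fᵢ` of `D⁻`,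
the vectors `eᵢ - ½fᵢ`, `eᵢ + ½fᵢ` and `ξ` form an orthogonal basis with norms `-1`, `1` and `1`.
-/

open Module Module.End

namespace LinearMap

lemma IsPerfPair.exists_dual_family {R M N ι : Type*} [CommRing R] [AddCommGroup M] [Module R M]
    [AddCommGroup N] [Module R N] [DecidableEq ι] {p : M →ₗ[R] N →ₗ[R] R} [p.IsPerfPair]
    (e : Basis ι R M) : ∃ f : ι → N, ∀ i j, p (e i) (f j) = if i = j then 1 else 0 :=
  ⟨fun j ↦ p.flip.toPerfPair.symm (e.coord j), fun i j ↦ by simp [Finsupp.single_apply]⟩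

section Hyperbolic

variable {K M : Type*} [Field K] [AddCommGroup M] [Module K M] {B : M →ₗ[K] M →ₗ[K] K}

lemma apply_add_smul_of_hyperbolic {ι : Type*} [DecidableEq ι] {e f : ι → M}
    (hB : ∀ x y, B x y = B y x)
    (hee : ∀ i j, B (e i) (e j) = 0) (hff : ∀ i j, B (f i) (f j) = 0)
    (hef : ∀ i j, B (e i) (f j) = if i = j then 1 else 0) (s t : K) (i j : ι) :
    B (e i + s • f i) (e j + t • f j) = if i = j then s + t else 0 := by
  have hfe : B (f i) (e j) = if i = j then 1 else 0 := by
    rw [hB, hef]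
    exact if_congr eq_comm rfl rfl
  simp only [map_add, map_smul, add_apply, smul_apply, hee, hff, hef, hfe, smul_eq_mul]
  split_ifs <;> ring

lemma exists_signature_basis_of_hyperbolic [NeZero (2 : K)] [FiniteDimensional K M] {n : ℕ}
    (hB : ∀ x y, B x y = B y x) {e f : Fin n → M} (x : M)
    (hee : ∀ i j, B (e i) (e j) = 0) (hff : ∀ i j, B (f i) (f j) = 0)
    (hef : ∀ i j, B (e i) (f j) = if i = j then 1 else 0)
    (hxe : ∀ i, B x (e i) = 0) (hxf : ∀ i, B x (f i) = 0) (hxx : B x x = 1)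
    (hdim : finrank K M = 2 * n + 1) :
    ∃ v : Fin n ⊕ Fin (n + 1) → M,
      LinearIndependent K v ∧ Submodule.span K (Set.range v) = ⊤ ∧
      (∀ i j, i ≠ j → B (v i) (v j) = 0) ∧
      (∀ i : Fin n, B (v (.inl i)) (v (.inl i)) = -1) ∧
      (∀ j : Fin (n + 1), B (v (.inr j)) (v (.inr j)) = 1) := by
  have hhyp := apply_add_smul_of_hyperbolic hB hee hff hef
  have hxef (t : K) (i : Fin n) : B x (e i + t • f i) = 0 := by simp [hxe, hxf]
  have hefx (t : K) (i : Fin n) : B (e i + t • f i) x = 0 := by rw [hB, hxef]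
  let v : Fin n ⊕ Fin (n + 1) → M := Sum.elim (fun i ↦ e i + (-2⁻¹ : K) • f i)
    (Fin.lastCases x fun i ↦ e i + (2⁻¹ : K) • f i)
  let σ : Fin n ⊕ Fin (n + 1) → K := Sum.elim (fun _ ↦ -1) (fun _ ↦ 1)
  have hgram : ∀ a b, B (v a) (v b) = if a = b then σ a else 0 := by
    have h2 : (2⁻¹ : K) + 2⁻¹ = 1 := by rw [← two_mul, mul_inv_cancel₀ two_ne_zero]
    rintro (i | i) (j | j) <;>
      [skip; cases j using Fin.lastCases; cases i using Fin.lastCases;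
        (cases i using Fin.lastCases <;> cases j using Fin.lastCases)] <;>
      simp only [v, σ, Sum.elim_inl, Sum.elim_inr, Fin.lastCases_last, Fin.lastCases_castSucc,
        hhyp, hxef, hefx, hxx] <;>
      simp [← neg_add, h2, Fin.castSucc_ne_last, (Fin.castSucc_ne_last _).symm]
  have horth : ∀ a b, a ≠ b → B (v a) (v b) = 0 := fun a b hab ↦ by rw [hgram, if_neg hab]
  have hindep : LinearIndependent K v :=
    linearIndependent_of_isOrthoᵢ (B := B) (isOrthoᵢ_def.2 horth) fun a ↦ by
      rcases a with _ | _ <;> simp [hgram, σ]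
  refine ⟨v, hindep, hindep.span_eq_top_of_card_eq_finrank' ?_, horth,
    fun i ↦ by simp [hgram, σ], fun j ↦ by simp [hgram, σ]⟩
  simp only [Fintype.card_sum, Fintype.card_fin, hdim]
  ring

end Hyperbolic

end LinearMap

namespace AlmostParacontact

variable {V : Type*} [AddCommGroup V] [Module ℝ V] {ξ : V} {η : V →ₗ[ℝ] ℝ} {φ : V →ₗ[ℝ] V}
  {g : V →ₗ[ℝ] V →ₗ[ℝ] ℝ}

lemma apply_xi_left (hηξ : η ξ = 1) (hφξ : φ ξ = 0)
    (hgφ : ∀ X Y, g (φ X) (φ Y) = - g X Y + η X * η Y) (w : V) : g ξ w = η w := by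
  have h := hgφ ξ w
  rw [hφξ, hηξ, map_zero, LinearMap.zero_apply] at h
  linarith

lemma eta_eq_zero_of_mem_eigenspace (hηφ : ∀ v, η (φ v) = 0) {c : ℝ} (hc : c ≠ 0) {v : V}
    (hv : v ∈ eigenspace φ c) : η v = 0 := by
  have h := hηφ v
  rw [mem_eigenspace_iff.1 hv, map_smul, smul_eq_mul] at h
  exact (mul_eq_zero.1 h).resolve_left hc

lemma apply_xi_eq_zero_of_mem_eigenspace (hηξ : η ξ = 1) (hφξ : φ ξ = 0) (hηφ : ∀ v, η (φ v) = 0)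
    (hgφ : ∀ X Y, g (φ X) (φ Y) = - g X Y + η X * η Y) {c : ℝ} (hc : c ≠ 0) {v : V}
    (hv : v ∈ eigenspace φ c) : g ξ v = 0 := by
  rw [apply_xi_left hηξ hφξ hgφ, eta_eq_zero_of_mem_eigenspace hηφ hc hv]

lemma apply_eq_zero_of_mem_eigenspace (hηφ : ∀ v, η (φ v) = 0)
    (hgφ : ∀ X Y, g (φ X) (φ Y) = - g X Y + η X * η Y) {c : ℝ} (hc : c ≠ 0) {v w : V}
    (hv : v ∈ eigenspace φ c) (hw : w ∈ eigenspace φ c) : g v w = 0 := by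
  have h := hgφ v w
  rw [mem_eigenspace_iff.1 hv, mem_eigenspace_iff.1 hw, eta_eq_zero_of_mem_eigenspace hηφ hc hv,
    map_smul, map_smul, LinearMap.smul_apply, smul_eq_mul, smul_eq_mul, zero_mul] at h
  -- `h` says `c² g(v, w) = -g(v, w)`
  nlinarith [sq_nonneg c]

lemma span_xi_sup_eigenspace_eq_top (hφ2 : ∀ v, φ (φ v) = v - η v • ξ) (hφξ : φ ξ = 0) :
    Submodule.span ℝ {ξ} ⊔ (eigenspace φ 1 ⊔ eigenspace φ (-1)) = ⊤ := by
  refine Submodule.eq_top_iff'.2 fun u ↦ ?_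
  have hu : u = η u • ξ + ((2⁻¹ : ℝ) • (u - η u • ξ + φ u) + (2⁻¹ : ℝ) • (u - η u • ξ - φ u)) := by
    module
  rw [hu]
  refine Submodule.add_mem_sup (Submodule.smul_mem _ _ (Submodule.mem_span_singleton_self ξ))
    (Submodule.add_mem_sup ?_ ?_) <;>
  · rw [mem_eigenspace_iff]
    simp only [map_smul, map_add, map_sub, hφξ, hφ2]
    module

lemma eigenspace_one_sup_eigenspace_neg_one (hηξ : η ξ = 1) (hφ2 : ∀ v, φ (φ v) = v - η v • ξ)
    (hφξ : φ ξ = 0) (hηφ : ∀ v, η (φ v) = 0) :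
    eigenspace φ 1 ⊔ eigenspace φ (-1) = LinearMap.ker η := by
  have hle : eigenspace φ 1 ⊔ eigenspace φ (-1) ≤ LinearMap.ker η :=
    sup_le (fun v hv ↦ eta_eq_zero_of_mem_eigenspace hηφ one_ne_zero hv)
      (fun v hv ↦ eta_eq_zero_of_mem_eigenspace hηφ (by norm_num) hv)
  refine le_antisymm hle fun u hu ↦ ?_
  obtain ⟨y, hy, w, hw, rfl⟩ :=
    Submodule.mem_sup.1 ((span_xi_sup_eigenspace_eq_top hφ2 hφξ).symm ▸ Submodule.mem_top (x := u))
  obtain ⟨a, rfl⟩ := Submodule.mem_span_singleton.1 hy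
  have ha : a = 0 := by
    simpa [hηξ, LinearMap.mem_ker.1 (hle hw)] using LinearMap.mem_ker.1 hu
  simpa [ha] using hw

lemma finrank_eigenspace_one_add_finrank_eigenspace_neg_one [FiniteDimensional ℝ V]
    (hηξ : η ξ = 1) (hφ2 : ∀ v, φ (φ v) = v - η v • ξ) (hφξ : φ ξ = 0) (hηφ : ∀ v, η (φ v) = 0) :
    finrank ℝ (eigenspace φ 1) + finrank ℝ (eigenspace φ (-1)) + 1 = finrank ℝ V := by
  have hdisj : eigenspace φ 1 ⊓ eigenspace φ (-1) = ⊥ :=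
    ((eigenspaces_iSupIndep φ).pairwiseDisjoint (by norm_num : (1 : ℝ) ≠ -1)).eq_bot
  have hη : η ≠ 0 := fun h ↦ by simp [h] at hηξ
  rw [← Submodule.finrank_sup_add_finrank_inf_eq, hdisj, finrank_bot, add_zero,
    eigenspace_one_sup_eigenspace_neg_one hηξ hφ2 hφξ hηφ,
    Module.Dual.finrank_ker_add_one_of_ne_zero hη]

lemma eq_zero_of_apply_eigenspace_eq_zero (hφ2 : ∀ v, φ (φ v) = v - η v • ξ) (hφξ : φ ξ = 0)
    (hgnd : ∀ v : V, (∀ w, g v w = 0) → v = 0) {v : V} (hξ : g v ξ = 0)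
    (h₁ : ∀ w ∈ eigenspace φ 1, g v w = 0) (h₂ : ∀ w ∈ eigenspace φ (-1), g v w = 0) : v = 0 := by
  have hker : Submodule.span ℝ {ξ} ⊔ (eigenspace φ 1 ⊔ eigenspace φ (-1)) ≤ LinearMap.ker (g v) :=
    sup_le (Submodule.span_le.2 (Set.singleton_subset_iff.2 hξ)) (sup_le h₁ h₂)
  rw [span_xi_sup_eigenspace_eq_top hφ2 hφξ, top_le_iff, LinearMap.ker_eq_top] at hker
  exact hgnd v fun w ↦ by simp [hker]

lemma isPerfPair_eigenspace_one_eigenspace_neg_one [FiniteDimensional ℝ V] (hηξ : η ξ = 1)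
    (hφ2 : ∀ v, φ (φ v) = v - η v • ξ) (hφξ : φ ξ = 0) (hηφ : ∀ v, η (φ v) = 0)
    (hgsymm : ∀ X Y, g X Y = g Y X) (hgφ : ∀ X Y, g (φ X) (φ Y) = - g X Y + η X * η Y)
    (hgnd : ∀ v : V, (∀ w, g v w = 0) → v = 0) :
    (g.compl₁₂ (eigenspace φ 1).subtype (eigenspace φ (-1)).subtype).IsPerfPair := by
  have hξ {c : ℝ} (hc : c ≠ 0) {v : V} (hv : v ∈ eigenspace φ c) : g v ξ = 0 := by
    rw [hgsymm, apply_xi_eq_zero_of_mem_eigenspace hηξ hφξ hηφ hgφ hc hv]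
  refine .of_injective (injective_iff_map_eq_zero _ |>.2 fun v hv ↦ ?_)
    (injective_iff_map_eq_zero _ |>.2 fun w hw ↦ ?_)
  · refine Subtype.ext (eq_zero_of_apply_eigenspace_eq_zero hφ2 hφξ hgnd (hξ one_ne_zero v.2)
      (fun w hw ↦ apply_eq_zero_of_mem_eigenspace hηφ hgφ one_ne_zero v.2 hw) fun w hw ↦ ?_)
    simpa using LinearMap.congr_fun hv ⟨w, hw⟩
  · refine Subtype.ext (eq_zero_of_apply_eigenspace_eq_zero hφ2 hφξ hgnd (hξ (by norm_num) w.2)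
      (fun v hv ↦ ?_) fun v hv ↦ apply_eq_zero_of_mem_eigenspace hηφ hgφ (by norm_num) w.2 hv)
    simpa [hgsymm v] using LinearMap.congr_fun hw ⟨v, hv⟩

end AlmostParacontact

open AlmostParacontact

theorem stmt_18
    {V : Type*} [AddCommGroup V] [Module ℝ V]
    (ξ : V) (η : V →ₗ[ℝ] ℝ) (φ : V →ₗ[ℝ] V)
    (hηξ : η ξ = 1)
    (hφ2 : ∀ v, φ (φ v) = v - η v • ξ)
    (hφξ : φ ξ = 0)
    (hηφ : ∀ v, η (φ v) = 0)
    (g : V →ₗ[ℝ] V →ₗ[ℝ] ℝ)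
    (hgsymm : ∀ X Y, g X Y = g Y X)
    (hgφ : ∀ X Y, g (φ X) (φ Y) = - g X Y + η X * η Y)
    (hgnd : ∀ v : V, (∀ w, g v w = 0) → v = 0)
    [FiniteDimensional ℝ V] (n : ℕ)
    (hdim : Module.finrank ℝ V = 2 * n + 1) :
    Module.finrank ℝ (LinearMap.ker (φ - (LinearMap.id : V →ₗ[ℝ] V))) = n ∧
    Module.finrank ℝ (LinearMap.ker (φ + (LinearMap.id : V →ₗ[ℝ] V))) = n ∧
    ∃ v : (Fin n ⊕ Fin (n + 1)) → V,
      LinearIndependent ℝ v ∧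
      Submodule.span ℝ (Set.range v) = ⊤ ∧
      (∀ i j, i ≠ j → g (v i) (v j) = 0) ∧
      (∀ i : Fin n, g (v (Sum.inl i)) (v (Sum.inl i)) = -1) ∧
      (∀ j : Fin (n + 1), g (v (Sum.inr j)) (v (Sum.inr j)) = 1) := by
  have hker_sub : LinearMap.ker (φ - LinearMap.id) = eigenspace φ 1 := by
    rw [eigenspace_def, one_smul]; rfl
  have hker_add : LinearMap.ker (φ + LinearMap.id) = eigenspace φ (-1) := by
    rw [eigenspace_def, neg_one_smul, sub_neg_eq_add]; rfl
  have hpair := isPerfPair_eigenspace_one_eigenspace_neg_one hηξ hφ2 hφξ hηφ hgsymm hgφ hgnd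
  have hsum := finrank_eigenspace_one_add_finrank_eigenspace_neg_one hηξ hφ2 hφξ hηφ
  have heq := finrank_of_isPerfPair (g.compl₁₂ (eigenspace φ 1).subtype (eigenspace φ (-1)).subtype)
  have hn : finrank ℝ (eigenspace φ 1) = n := by omega
  rw [hker_sub, hker_add]
  refine ⟨hn, by omega, ?_⟩
  let e := finBasisOfFinrankEq ℝ _ hn
  obtain ⟨f, hef⟩ := hpair.exists_dual_family e
  have hξ {c : ℝ} (hc : c ≠ 0) {v : V} (hv : v ∈ eigenspace φ c) : g ξ v = 0 :=
    apply_xi_eq_zero_of_mem_eigenspace hηξ hφξ hηφ hgφ hc hv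
  exact LinearMap.exists_signature_basis_of_hyperbolic hgsymm ξ
    (fun i j ↦ apply_eq_zero_of_mem_eigenspace hηφ hgφ one_ne_zero (e i).2 (e j).2)
    (fun i j ↦ apply_eq_zero_of_mem_eigenspace hηφ hgφ (by norm_num) (f i).2 (f j).2) hef
    (fun i ↦ hξ one_ne_zero (e i).2) (fun i ↦ hξ (by norm_num) (f i).2)
    (by rw [apply_xi_left hηξ hφξ hgφ, hηξ]) hdim
end

section
/- Assume κ > −1 and set λ := √(1+κ). The linear isomorphism x ↦ x + φ(x) from ker(h − λ·id) onto D⁺ := { v : φ(v) = v } pulls the symmetric bilinear form (v,v′) ↦ g(h(v),v′) on D⁺ back to 2λ·(g restricted to ker(h − λ·id)); the linear isomorphism x ↦ x − φ(x) from ker(h + λ·id) onto D⁻ := { v : φ(v) = −v } pulls the form (v,v′) ↦ g(h(v),v′) on D⁻ back to −2λ·(g restricted to ker(h + λ·id)). In particular the two symmetric forms g(h·,·) on D⁺ and on D⁻ have the same signature (they are the Pang invariants Π_{D⁺}/2 and Π_{D⁻}/2 of the canonical Legendre foliations). -/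
theorem stmt_19
    {V : Type*} [AddCommGroup V] [Module ℝ V]
    (ξ : V) (η : V →ₗ[ℝ] ℝ) (φ h : V →ₗ[ℝ] V) (κ : ℝ)
    (hηξ : η ξ = 1)
    (hφ2 : ∀ v, φ (φ v) = v - η v • ξ)
    (hφξ : φ ξ = 0)
    (hηφ : ∀ v, η (φ v) = 0)
    (hhξ : h ξ = 0)
    (hηh : ∀ v, η (h v) = 0)
    (hhφ : ∀ v, h (φ v) = - φ (h v))
    (hh2 : ∀ v, h (h v) = (1 + κ) • φ (φ v))
    (g : V →ₗ[ℝ] V →ₗ[ℝ] ℝ)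
    (hgsymm : ∀ X Y, g X Y = g Y X)
    (hgφ : ∀ X Y, g (φ X) (φ Y) = - g X Y + η X * η Y)
    (hgskew : ∀ X Y, g X (φ Y) = - g (φ X) Y)
    (hgh : ∀ X Y, g (h X) Y = g X (h Y))
    (hκ : -1 < κ)
    (lam : ℝ) (hlam : lam = Real.sqrt (1 + κ)) :
    ((∀ x, h x = lam • x → φ (x + φ x) = x + φ x) ∧
     (∀ x, h x = lam • x → x + φ x = 0 → x = 0) ∧
     (∀ v, φ v = v → ∃ x, h x = lam • x ∧ v = x + φ x) ∧
     (∀ x x', h x = lam • x → h x' = lam • x' →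
        g (h (x + φ x)) (x' + φ x') = 2 * lam * g x x')) ∧
    ((∀ y, h y = (-lam) • y → φ (y - φ y) = -(y - φ y)) ∧
     (∀ y, h y = (-lam) • y → y - φ y = 0 → y = 0) ∧
     (∀ v, φ v = -v → ∃ y, h y = (-lam) • y ∧ v = y - φ y) ∧
     (∀ y y', h y = (-lam) • y → h y' = (-lam) • y' →
        g (h (y - φ y)) (y' - φ y') = -(2 * lam) * g y y')) := by
  have hpos : (0:ℝ) < 1 + κ := by linarith
  have hlam2 : lam * lam = 1 + κ := by
    rw [hlam]; exact Real.mul_self_sqrt (le_of_lt hpos)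
  have hlampos : 0 < lam := by rw [hlam]; exact Real.sqrt_pos.mpr hpos
  have hlamne : lam ≠ 0 := ne_of_gt hlampos
  -- η vanishes on eigenvectors with nonzero eigenvalue
  have heta : ∀ c : ℝ, c ≠ 0 → ∀ x, h x = c • x → η x = 0 := by
    intro c hc x hx
    have e := hηh x
    rw [hx, map_smul, smul_eq_mul] at e
    exact (mul_eq_zero.mp e).resolve_left hc
  -- opposite eigenvectors are g-orthogonal
  have horth : ∀ a b, h a = lam • a → h b = (-lam) • b → g a b = 0 := by
    intro a b ha hb
    have e := hgh a b
    rw [ha, hb] at e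
    simp only [map_smul, LinearMap.smul_apply, smul_eq_mul, neg_mul] at e
    have e2 : lam * g a b = 0 := by linarith
    exact (mul_eq_zero.mp e2).resolve_left hlamne
  -- φ maps λ-eigenvectors to (−λ)-eigenvectors and vice versa
  have hφeig : ∀ c : ℝ, ∀ x, h x = c • x → h (φ x) = (-c) • φ x := by
    intro c x hx
    rw [hhφ, hx, map_smul]
    module
  constructor
  · refine ⟨?_, ?_, ?_, ?_⟩
    · intro x hx
      have hx0 : η x = 0 := heta lam hlamne x hx
      rw [map_add, hφ2 x, hx0, zero_smul, sub_zero]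
      abel
    · intro x hx hsum
      have hφx : φ x = -x := by
        have := eq_neg_of_add_eq_zero_right hsum
        exact this
      have e1 := hφeig lam x hx
      rw [hφx, map_neg, hx] at e1
      have e2 : (2 * lam) • x = 0 := by
        have : -(lam • x) = (-lam) • (-x) := e1
        rw [smul_neg, neg_smul, neg_neg] at this
        have h3 : lam • x + lam • x = 0 := by
          nth_rewrite 1 [← this]; abel
        rw [← h3]; module
      have : x = (2 * lam)⁻¹ • ((2 * lam) • x) := by
        rw [smul_smul, inv_mul_cancel₀ (by positivity), one_smul]
      rw [this, e2, smul_zero]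
    · intro v hv
      have hv0 : η v = 0 := by rw [← hv, hηφ]
      have hφhv : φ (h v) = - h v := by
        have e := hhφ v
        rw [hv] at e
        exact (neg_eq_iff_eq_neg.mp e.symm)
      have hhh : h (h v) = (lam * lam) • v := by
        rw [hh2, hφ2, hv0, zero_smul, sub_zero, hlam2]
      refine ⟨(2 * lam)⁻¹ • (lam • v + h v), ?_, ?_⟩
      · rw [map_smul, map_add, map_smul, hhh]
        module
      · rw [map_smul, map_add, map_smul, hv, hφhv]
        match_scalars <;> field_simp <;> ring
    · intro x x' hx hx'
      have hx0 : η x = 0 := heta lam hlamne x hx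
      have hx'0 : η x' = 0 := heta lam hlamne x' hx'
      have e3 : g (φ x) x' = 0 := by
        rw [hgsymm]; exact horth x' (φ x) hx' (hφeig lam x hx)
      have hsum : h (x + φ x) = lam • x - lam • φ x := by
        rw [map_add, hx, hhφ, hx, map_smul]; abel
      have e1 : g (φ x) (φ x') = - g x x' + η x * η x' := hgφ x x'
      have e2 : g x (φ x') = - g (φ x) x' := hgskew x x'
      rw [hsum]
      simp only [map_sub, map_add, map_smul, LinearMap.sub_apply, LinearMap.add_apply,
        LinearMap.smul_apply, smul_eq_mul]
      rw [e1, e2, e3, hx0]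
      ring
  · refine ⟨?_, ?_, ?_, ?_⟩
    · intro y hy
      have hy0 : η y = 0 := heta (-lam) (by simpa using hlamne) y hy
      rw [map_sub, hφ2 y, hy0, zero_smul, sub_zero]
      abel
    · intro y hy hsub
      have hφy : φ y = y := (sub_eq_zero.mp hsub).symm
      have e1 := hφeig (-lam) y hy
      rw [hφy, neg_neg, hy] at e1
      have e2 : (2 * lam) • y = 0 := by
        have h3 : lam • y - (-lam) • y = 0 := by rw [e1]; abel
        rw [← h3]; module
      have : y = (2 * lam)⁻¹ • ((2 * lam) • y) := by
        rw [smul_smul, inv_mul_cancel₀ (by positivity), one_smul]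
      rw [this, e2, smul_zero]
    · intro v hv
      have hv0 : η v = 0 := by
        have e := hηφ v
        rw [hv, map_neg, neg_eq_zero] at e
        exact e
      have hφhv : φ (h v) = h v := by
        have e := hhφ v
        rw [hv, map_neg] at e
        exact (neg_inj.mp e).symm
      have hhh : h (h v) = (lam * lam) • v := by
        rw [hh2, hφ2, hv0, zero_smul, sub_zero, hlam2]
      refine ⟨(2 * lam)⁻¹ • (lam • v - h v), ?_, ?_⟩
      · rw [map_smul, map_sub, map_smul, hhh]
        module
      · rw [map_smul, map_sub, map_smul, hv, hφhv]
        match_scalars <;> field_simp <;> ring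
    · intro y y' hy hy'
      have hy0 : η y = 0 := heta (-lam) (by simpa using hlamne) y hy
      have hy'0 : η y' = 0 := heta (-lam) (by simpa using hlamne) y' hy'
      have hφyeig : h (φ y) = lam • φ y := by
        have := hφeig (-lam) y hy
        rwa [neg_neg] at this
      have e3 : g (φ y) y' = 0 := horth (φ y) y' hφyeig hy'
      have hsum : h (y - φ y) = (-lam) • y - lam • φ y := by
        rw [map_sub, hy, hhφ, hy, map_smul]
        module
      have e1 : g (φ y) (φ y') = - g y y' + η y * η y' := hgφ y y'
      have e2 : g y (φ y') = - g (φ y) y' := hgskew y y'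
      rw [hsum]
      simp only [map_sub, map_add, map_smul, LinearMap.sub_apply, LinearMap.add_apply,
        LinearMap.smul_apply, smul_eq_mul]
      rw [e1, e2, e3, hy0]
      ring
end
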